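/- arXiv:1604.08661 — 4 statements merged into one kernel-verified Lean document; each statement's English description precedes it below -/
import Mathlib

section
/- Let p ∈ (1,∞) and let X be a Banach space whose 1-unconditional Schauder basis satisfies a lower ℓ_p-estimate with constant 1. Then X is asymptotically p-uniformly convex: there is C > 0 with δ̄_X(t) ≥ C t^p for all t ∈ [0,1]. -/
open Filter Topology Metric Set Pointwise

noncomputable section

namespace CLG

variable {X Y : Type*}

/-- The expansion modulus `ω_f`. -/
def expansionMod [PseudoMetricSpace X] [PseudoMetricSpace Y] (f : X → Y) (t : ℝ) : ℝ :=
  sSup {r : ℝ | ∃ x y : X, dist x y ≤ t ∧ r = dist (f x) (f y)}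

/-- The compression modulus `ρ_f`. -/
def compressionMod [PseudoMetricSpace X] [PseudoMetricSpace Y] (f : X → Y) (t : ℝ) : ℝ :=
  sInf {r : ℝ | ∃ x y : X, t ≤ dist x y ∧ r = dist (f x) (f y)}

/-- `f` is a coarse map: `ω_f(t) < ∞` for every `t`. -/
def IsCoarseMap [PseudoMetricSpace X] [PseudoMetricSpace Y] (f : X → Y) : Prop :=
  ∀ t : ℝ, ∃ C : ℝ, ∀ x y : X, dist x y ≤ t → dist (f x) (f y) ≤ C

/-- `f` is a coarse embedding: a coarse map with `ρ_f(t) → ∞`. -/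
def IsCoarseEmbedding [PseudoMetricSpace X] [PseudoMetricSpace Y] (f : X → Y) : Prop :=
  IsCoarseMap f ∧ ∀ M : ℝ, ∃ t : ℝ, ∀ x y : X, t ≤ dist x y → M ≤ dist (f x) (f y)

/-- `f` is a uniform embedding: `ω_f(t) → 0` as `t → 0` and `ρ_f(t) > 0` for `t > 0`. -/
def IsUniformEmbeddingMap [PseudoMetricSpace X] [PseudoMetricSpace Y] (f : X → Y) : Prop :=
  (∀ ε > (0:ℝ), ∃ δ > (0:ℝ), ∀ x y : X, dist x y ≤ δ → dist (f x) (f y) ≤ ε) ∧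
  (∀ t > (0:ℝ), ∃ r > (0:ℝ), ∀ x y : X, t ≤ dist x y → r ≤ dist (f x) (f y))

/-- `f` is a coarse Lipschitz embedding. -/
def IsCoarseLipschitzEmbedding [PseudoMetricSpace X] [PseudoMetricSpace Y] (f : X → Y) : Prop :=
  ∃ L : ℝ, 0 < L ∧ ∀ x y : X,
    dist (f x) (f y) ≤ L * dist x y + L ∧ L⁻¹ * dist x y - L ≤ dist (f x) (f y)

def CoarseLipschitzEmbeds (X Y : Type*) [PseudoMetricSpace X] [PseudoMetricSpace Y] : Prop :=
  ∃ f : X → Y, IsCoarseLipschitzEmbedding f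

/-- The set of exponents `α > 0` admitting a coarse embedding `f : X → Y` with
`ρ_f(t) ≥ L⁻¹ t^α − L`. -/
def compressionSet (X Y : Type*) [NormedAddCommGroup X] [NormedAddCommGroup Y] : Set ℝ :=
  {α : ℝ | 0 < α ∧ ∃ f : X → Y, IsCoarseMap f ∧ ∃ L : ℝ, 0 < L ∧
    ∀ x y : X, L⁻¹ * ‖x - y‖ ^ α - L ≤ ‖f x - f y‖}

/-- The compression exponent `α_Y(X)` (note the argument order: `compressionExp X Y = α_Y(X)`).
By convention `sSup ∅ = 0`, matching `α_Y(X) = 0` when no such embedding exists. -/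
def compressionExp (X Y : Type*) [NormedAddCommGroup X] [NormedAddCommGroup Y] : ℝ :=
  sSup (compressionSet X Y)

/-- The modulus of asymptotic uniform smoothness `ρ̄_X(t)`. -/
def ausModulus (X : Type*) [NormedAddCommGroup X] [NormedSpace ℝ X] (t : ℝ) : ℝ :=
  ⨆ x : {x : X // ‖x‖ = 1},
    ⨅ E : {E : Submodule ℝ X // FiniteDimensional ℝ (X ⧸ E)},
      ⨆ h : {h : X // h ∈ E.1 ∧ ‖h‖ = 1}, (‖x.1 + t • h.1‖ - 1)

/-- The modulus of asymptotic uniform convexity `δ̄_X(t)`. -/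
def aucModulus (X : Type*) [NormedAddCommGroup X] [NormedSpace ℝ X] (t : ℝ) : ℝ :=
  ⨅ x : {x : X // ‖x‖ = 1},
    ⨆ E : {E : Submodule ℝ X // FiniteDimensional ℝ (X ⧸ E)},
      ⨅ h : {h : X // h ∈ E.1 ∧ ‖h‖ = 1}, (‖x.1 + t • h.1‖ - 1)

/-- Asymptotically uniformly smooth: `ρ̄_X(t)/t → 0` as `t → 0⁺`. -/
def AsympUniformlySmooth (X : Type*) [NormedAddCommGroup X] [NormedSpace ℝ X] : Prop :=
  Tendsto (fun t => ausModulus X t / t) (𝓝[>] (0:ℝ)) (𝓝 0)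

/-- Asymptotically `p`-uniformly smooth: `ρ̄_X(t) ≤ C t^p` on `[0,1]`. -/
def AsympPUnifSmooth (X : Type*) [NormedAddCommGroup X] [NormedSpace ℝ X] (p : ℝ) : Prop :=
  ∃ C > (0:ℝ), ∀ t ∈ Set.Icc (0:ℝ) 1, ausModulus X t ≤ C * t ^ p

/-- Asymptotically `p`-uniformly convex: `δ̄_X(t) ≥ C t^p` on `[0,1]`. -/
def AsympPUnifConvex (X : Type*) [NormedAddCommGroup X] [NormedSpace ℝ X] (p : ℝ) : Prop :=
  ∃ C > (0:ℝ), ∀ t ∈ Set.Icc (0:ℝ) 1, C * t ^ p ≤ aucModulus X t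

/-- Reflexivity of a Banach space: the canonical embedding into the double dual is onto. -/
def BanachReflexive (X : Type*) [NormedAddCommGroup X] [NormedSpace ℝ X] : Prop :=
  Function.Surjective (NormedSpace.inclusionInDoubleDual ℝ X)

/-- A weakly null sequence. -/
def WeaklyNull [NormedAddCommGroup X] [NormedSpace ℝ X] (x : ℕ → X) : Prop :=
  ∀ φ : X →L[ℝ] ℝ, Tendsto (fun n => φ (x n)) atTop (𝓝 0)

/-- A semi-normalized sequence. -/
def SemiNormalized [NormedAddCommGroup X] (x : ℕ → X) : Prop :=
  ∃ a b : ℝ, 0 < a ∧ ∀ n, a ≤ ‖x n‖ ∧ ‖x n‖ ≤ b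

/-- The Banach-Saks property. -/
def BanachSaksProp (X : Type*) [NormedAddCommGroup X] [NormedSpace ℝ X] : Prop :=
  ∀ x : ℕ → X, (∃ b : ℝ, ∀ n, ‖x n‖ ≤ b) → ∃ φ : ℕ → ℕ, StrictMono φ ∧ ∃ L : X,
    Tendsto (fun k : ℕ => (k:ℝ)⁻¹ • ∑ j ∈ Finset.range k, x (φ j)) atTop (𝓝 L)

/-- The alternating Banach-Saks property. -/
def AltBanachSaks (X : Type*) [NormedAddCommGroup X] [NormedSpace ℝ X] : Prop :=
  ∀ x : ℕ → X, (∃ b : ℝ, ∀ n, ‖x n‖ ≤ b) → ∃ φ : ℕ → ℕ, StrictMono φ ∧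
    ∃ ε : ℕ → ℝ, (∀ j, ε j = 1 ∨ ε j = -1) ∧ ∃ L : X,
      Tendsto (fun k : ℕ => (k:ℝ)⁻¹ • ∑ j ∈ Finset.range k, ε j • x (φ j)) atTop (𝓝 L)

/-- The `p`-Banach-Saks property. -/
def PBanachSaks (X : Type*) [NormedAddCommGroup X] [NormedSpace ℝ X] (p : ℝ) : Prop :=
  ∀ x : ℕ → X, SemiNormalized x → WeaklyNull x →
    ∃ φ : ℕ → ℕ, StrictMono φ ∧ ∃ c > (0:ℝ), ∀ (k : ℕ) (n : Fin k → ℕ),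
      StrictMono n → (∀ i, k ≤ n i) → ‖∑ i, x (φ (n i))‖ ≤ c * (k : ℝ) ^ (1 / p)

/-- The `p`-co-Banach-Saks property. -/
def PCoBanachSaks (X : Type*) [NormedAddCommGroup X] [NormedSpace ℝ X] (p : ℝ) : Prop :=
  ∀ x : ℕ → X, SemiNormalized x → WeaklyNull x →
    ∃ φ : ℕ → ℕ, StrictMono φ ∧ ∃ c > (0:ℝ), ∀ (k : ℕ) (n : Fin k → ℕ),
      StrictMono n → (∀ i, k ≤ n i) → c * (k : ℝ) ^ (1 / p) ≤ ‖∑ i, x (φ (n i))‖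

/-- The almost `p`-co-Banach-Saks property. -/
def AlmostPCoBanachSaks (X : Type*) [NormedAddCommGroup X] [NormedSpace ℝ X] (p : ℝ) : Prop :=
  ∀ x : ℕ → X, SemiNormalized x → WeaklyNull x →
    ∃ φ : ℕ → ℕ, StrictMono φ ∧ ∃ θ : ℕ → ℝ, (∀ j, 1 ≤ θ j) ∧
      (∀ α > (0:ℝ), Tendsto (fun j : ℕ => (j:ℝ) ^ α / θ j) atTop atTop) ∧
      ∀ (k : ℕ) (n : Fin k → ℕ), StrictMono n → (∀ i, k ≤ n i) →
        (k:ℝ) ^ (1 / p) / θ k ≤ ‖∑ i, x (φ (n i))‖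

/-- `X` contains an isomorphic copy of `ℓ₁`, witnessed by a sequence equivalent to the
unit vector basis of `ℓ₁`. -/
def ContainsL1Copy (X : Type*) [NormedAddCommGroup X] [NormedSpace ℝ X] : Prop :=
  ∃ (x : ℕ → X) (c C : ℝ), 0 < c ∧ 0 < C ∧ ∀ (k : ℕ) (a : Fin k → ℝ),
    c * (∑ i, |a i|) ≤ ‖∑ i, a i • x i.1‖ ∧ ‖∑ i, a i • x i.1‖ ≤ C * ∑ i, |a i|

/-- The set of approximate midpoints of `x` and `y` with error `δ`. -/
def Mid [PseudoMetricSpace X] (x y : X) (δ : ℝ) : Set X :=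
  {z : X | max (dist x z) (dist y z) ≤ (1 + δ) / 2 * dist x y}

/-- `Lip_s(f) = sup_{t ≥ s} ω_f(t)/t`. -/
def lipAt [PseudoMetricSpace X] [PseudoMetricSpace Y] (f : X → Y) (s : ℝ) : ℝ :=
  ⨆ t : {t : ℝ // s ≤ t}, expansionMod f t.1 / t.1

/-- `Lip_∞(f) = inf_{s > 0} Lip_s(f)`. -/
def lipInfty [PseudoMetricSpace X] [PseudoMetricSpace Y] (f : X → Y) : ℝ :=
  ⨅ s : {s : ℝ // 0 < s}, lipAt f s.1

end CLG

open CLG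
namespace CLG

/-- A `1`-unconditional Schauder basis of `X`, given by basis vectors, biorthogonal
coordinate functionals, unconditionally convergent expansions, and unconditionality
constant `1`. -/
structure UncondBasis (X : Type*) [NormedAddCommGroup X] [NormedSpace ℝ X] where
  e : ℕ → X
  coord : ℕ → X →L[ℝ] ℝ
  biorth : ∀ n m : ℕ, coord n (e m) = if n = m then 1 else 0
  expand : ∀ x : X, HasSum (fun n => coord n x • e n) x
  uncond : ∀ (x y : X) (ε : ℕ → ℝ), (∀ n, ε n = 1 ∨ ε n = -1) →
    HasSum (fun n => (ε n * coord n x) • e n) y → ‖y‖ ≤ ‖x‖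

variable {X : Type*} [NormedAddCommGroup X] [NormedSpace ℝ X]

/-- Two vectors have disjoint supports with respect to the basis. -/
def UncondBasis.DisjSupp (B : UncondBasis X) (u v : X) : Prop :=
  ∀ n : ℕ, B.coord n u = 0 ∨ B.coord n v = 0

/-- The basis satisfies an upper `ℓ_p`-estimate with constant `1`. -/
def UncondBasis.UpperEst (B : UncondBasis X) (p : ℝ) : Prop :=
  ∀ (k : ℕ) (v : Fin k → X), (∀ i j, i ≠ j → B.DisjSupp (v i) (v j)) →
    ‖∑ i, v i‖ ^ p ≤ ∑ i, ‖v i‖ ^ p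

/-- The basis satisfies a lower `ℓ_p`-estimate with constant `1`. -/
def UncondBasis.LowerEst (B : UncondBasis X) (p : ℝ) : Prop :=
  ∀ (k : ℕ) (v : Fin k → X), (∀ i j, i ≠ j → B.DisjSupp (v i) (v j)) →
    ∑ i, ‖v i‖ ^ p ≤ ‖∑ i, v i‖ ^ p

end CLG

namespace CLGAux
open CLG

variable {X : Type*} [NormedAddCommGroup X] [NormedSpace ℝ X]

lemma e_ne_zero (B : UncondBasis X) (n : ℕ) : B.e n ≠ 0 := by
  intro h
  have h1 := B.biorth n n
  rw [h] at h1
  simp at h1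

lemma coord_partial (B : UncondBasis X) (x : X) (N m : ℕ) :
    B.coord m (∑ i ∈ Finset.range N, B.coord i x • B.e i)
      = if m ∈ Finset.range N then B.coord m x else 0 := by
  rw [map_sum]
  have h : ∀ i ∈ Finset.range N, B.coord m (B.coord i x • B.e i)
      = if m = i then B.coord i x else 0 := by
    intro i _
    rw [map_smul, smul_eq_mul, B.biorth m i]
    split <;> simp_all
  rw [Finset.sum_congr rfl h, Finset.sum_ite_eq]

lemma concave_chord {p : ℝ} (hp : 1 < p) {a : ℝ} (ha : 0 ≤ a) (ha1 : a ≤ 1) :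
    1 + (2 ^ (1/p) - 1) * a ≤ (1 + a) ^ (1/p) := by
  have hp0 : (0:ℝ) < p := lt_trans one_pos hp
  have hle : (1:ℝ)/p ≤ 1 := by rw [div_le_one hp0]; linarith
  have hconc := Real.concaveOn_rpow (by positivity : (0:ℝ) ≤ 1/p) hle
  have h := hconc.2 (Set.mem_Ici.mpr (by norm_num : (0:ℝ) ≤ 1))
      (Set.mem_Ici.mpr (by norm_num : (0:ℝ) ≤ 2))
      (by linarith : (0:ℝ) ≤ 1 - a) ha (by ring)
  simp only [smul_eq_mul, mul_one, Real.one_rpow] at h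
  rw [show (1:ℝ) - a + a * 2 = 1 + a from by ring] at h
  nlinarith [h]

/-- The coordinate map onto the first `N` coordinates. -/
def coordMap (B : UncondBasis X) (N : ℕ) : X →ₗ[ℝ] (Fin N → ℝ) :=
  LinearMap.pi fun i => (B.coord i.1).toLinearMap

lemma quot_fd (B : UncondBasis X) (N : ℕ) :
    FiniteDimensional ℝ (X ⧸ LinearMap.ker (coordMap B N)) := by
  have : FiniteDimensional ℝ ↥(LinearMap.range (coordMap B N)) := inferInstance
  exact LinearEquiv.finiteDimensional (coordMap B N).quotKerEquivRange.symm

lemma mem_ker_coordMap (B : UncondBasis X) (N : ℕ) (h : X) :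
    h ∈ LinearMap.ker (coordMap B N) ↔ ∀ i, i < N → B.coord i h = 0 := by
  rw [LinearMap.mem_ker]
  constructor
  · intro H i hi
    have := congrFun H ⟨i, hi⟩
    simpa [coordMap] using this
  · intro H
    funext i
    simpa [coordMap] using H i.1 i.2

lemma key {X : Type*} [NormedAddCommGroup X] [NormedSpace ℝ X] [CompleteSpace X]
    (p : ℝ) (hp : 1 < p) (B : UncondBasis X) (hB : B.LowerEst p)
    (t : ℝ) (ht0 : 0 ≤ t) (ht1 : t ≤ 1) (x : X) (hx : ‖x‖ = 1) :
    (2 ^ (1/p) - 1)/4 * t ^ p ≤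
      ⨆ E : {E : Submodule ℝ X // FiniteDimensional ℝ (X ⧸ E)},
        ⨅ h : {h : X // h ∈ E.1 ∧ ‖h‖ = 1}, (‖x + t • h.1‖ - 1) := by
  classical
  have hp0 : (0:ℝ) < p := lt_trans one_pos hp
  set c : ℝ := 2 ^ (1/p) - 1 with hcdef
  have hc0 : 0 < c := by
    have h1 : (2:ℝ) ^ (0:ℝ) < 2 ^ (1/p) :=
      Real.rpow_lt_rpow_of_exponent_lt (by norm_num) (by positivity)
    rw [Real.rpow_zero] at h1
    simp only [hcdef]; linarith
  -- the iSup is bounded above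
  have hbdd : BddAbove (Set.range fun E : {E : Submodule ℝ X // FiniteDimensional ℝ (X ⧸ E)} =>
      ⨅ h : {h : X // h ∈ E.1 ∧ ‖h‖ = 1}, (‖x + t • h.1‖ - 1)) := by
    refine ⟨t, ?_⟩
    rintro _ ⟨E, rfl⟩
    dsimp only
    rcases isEmpty_or_nonempty {h : X // h ∈ E.1 ∧ ‖h‖ = 1} with hE | hE
    · rw [Real.iInf_of_isEmpty]; exact ht0
    · obtain ⟨h⟩ := hE
      refine ciInf_le_of_le ⟨-1, ?_⟩ h ?_
      · rintro _ ⟨h', rfl⟩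
        dsimp only
        have := norm_nonneg (x + t • h'.1); linarith
      · have h1 : ‖x + t • h.1‖ ≤ ‖x‖ + ‖t • h.1‖ := norm_add_le _ _
        rw [norm_smul, Real.norm_eq_abs, abs_of_nonneg ht0, h.2.2, hx] at h1
        linarith
  rcases eq_or_lt_of_le ht0 with rfl | ht'
  · -- t = 0
    rw [Real.zero_rpow (ne_of_gt hp0), mul_zero]
    refine le_ciSup_of_le hbdd ⟨LinearMap.ker (coordMap B 0), quot_fd B 0⟩ ?_
    rcases isEmpty_or_nonempty
        {h : X // h ∈ LinearMap.ker (coordMap B 0) ∧ ‖h‖ = 1} with hE | hE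
    · rw [Real.iInf_of_isEmpty]
    · refine le_ciInf fun h => ?_
      simp [hx]
  -- t > 0
  have htp : 0 < t ^ p := Real.rpow_pos_of_pos ht' p
  have htp1 : t ^ p ≤ 1 := Real.rpow_le_one ht0 ht1 hp0.le
  set δ : ℝ := t ^ p * min (c/4) (1/(2*p)) with hδdef
  have hδ : 0 < δ := by
    have : 0 < min (c/4) (1/(2*p)) := lt_min (div_pos hc0 (by norm_num)) (by positivity)
    positivity
  have hδle : δ ≤ t ^ p * (1/(2*p)) :=
    mul_le_mul_of_nonneg_left (min_le_right _ _) htp.le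
  have hδ2 : δ ≤ c/4 * t ^ p := by
    have := mul_le_mul_of_nonneg_left (min_le_left (c/4) (1/(2*p))) htp.le
    linarith
  have hpd : p * δ ≤ t ^ p / 2 := by
    have h1 := mul_le_mul_of_nonneg_left hδle hp0.le
    have h2 : p * (t ^ p * (1/(2*p))) = t ^ p / 2 := by field_simp
    linarith
  have hδhalf : δ ≤ 1/2 := by nlinarith
  -- choose N with small tail
  obtain ⟨N, hN⟩ := (Metric.tendsto_atTop.mp (B.expand x).tendsto_sum_nat) δ hδ
  set u : X := ∑ i ∈ Finset.range N, B.coord i x • B.e i with hudef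
  have hux : ‖x - u‖ ≤ δ := by
    have := hN N le_rfl
    rw [dist_eq_norm] at this
    rw [← norm_neg]
    simp only [neg_sub]
    exact le_of_lt this
  refine le_ciSup_of_le hbdd ⟨LinearMap.ker (coordMap B N), quot_fd B N⟩ ?_
  have hne : Nonempty {h : X // h ∈ LinearMap.ker (coordMap B N) ∧ ‖h‖ = 1} := by
    refine ⟨⟨‖B.e N‖⁻¹ • B.e N, ?_, ?_⟩⟩
    · refine Submodule.smul_mem _ _ ?_
      rw [mem_ker_coordMap]
      intro i hi
      rw [B.biorth]
      simp [Nat.ne_of_lt hi]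
    · rw [norm_smul, norm_inv, norm_norm,
        inv_mul_cancel₀ (norm_ne_zero_iff.mpr (e_ne_zero B N))]
  refine le_ciInf ?_
  rintro ⟨h, hhE, hh1⟩
  have hcoordh : ∀ i, i < N → B.coord i h = 0 := (mem_ker_coordMap B N h).mp hhE
  -- disjoint supports
  have hd : B.DisjSupp u (t • h) := by
    intro n
    by_cases hn : n < N
    · right; rw [map_smul, smul_eq_mul, hcoordh n hn, mul_zero]
    · left
      rw [hudef, coord_partial]
      simp [Finset.mem_range, hn]
  have hdisj : ∀ i j : Fin 2, i ≠ j → B.DisjSupp (![u, t • h] i) (![u, t • h] j) := by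
    intro i j hij
    fin_cases i <;> fin_cases j <;>
      simp only [Matrix.cons_val_zero, Matrix.cons_val_one, Matrix.head_cons] at *
    · exact absurd rfl hij
    · exact hd
    · exact fun n => (hd n).symm
    · exact absurd rfl hij
  have hlow := hB 2 ![u, t • h] hdisj
  rw [Fin.sum_univ_two, Fin.sum_univ_two] at hlow
  simp only [Matrix.cons_val_zero, Matrix.cons_val_one, Matrix.head_cons] at hlow
  -- hlow : ‖u‖^p + ‖t•h‖^p ≤ ‖u + t•h‖^p
  have hth : ‖t • h‖ = t := by
    rw [norm_smul, Real.norm_eq_abs, abs_of_pos ht', hh1, mul_one]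
  rw [hth] at hlow
  have hu1 : 1 - δ ≤ ‖u‖ := by
    have h1 := norm_sub_norm_le x u
    rw [hx] at h1
    linarith
  have h0 : (0:ℝ) ≤ 1 - δ := by linarith
  have hber : 1 - p * δ ≤ (1 - δ) ^ p := by
    have h1 := one_add_mul_self_le_rpow_one_add
      (show (-1:ℝ) ≤ -δ by linarith) hp.le
    rw [show (1:ℝ) + -δ = 1 - δ by ring] at h1
    linarith
  have hmn : (1 - δ) ^ p ≤ ‖u‖ ^ p := Real.rpow_le_rpow h0 hu1 hp0.le
  set a : ℝ := t ^ p - p * δ with hadef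
  have ha0 : 0 ≤ a := by simp only [hadef]; linarith
  have ha1 : a ≤ 1 := by
    have : 0 ≤ p * δ := by positivity
    simp only [hadef]; linarith
  have h3 : 1 + a ≤ ‖u + t • h‖ ^ p := by
    simp only [hadef]; linarith
  have h4 : (1 + a) ^ (1/p) ≤ ‖u + t • h‖ := by
    have hmono := Real.rpow_le_rpow (by linarith : (0:ℝ) ≤ 1 + a) h3
      (by positivity : (0:ℝ) ≤ 1/p)
    rwa [← Real.rpow_mul (norm_nonneg _), mul_one_div, div_self (ne_of_gt hp0),
      Real.rpow_one] at hmono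
  have h5 : 1 + c * a ≤ (1 + a) ^ (1/p) := concave_chord hp ha0 ha1
  have h6 : ‖u + t • h‖ ≤ ‖x + t • h‖ + δ := by
    have heq : u + t • h = (x + t • h) - (x - u) := by abel
    rw [heq]
    have := norm_sub_le (x + t • h) (x - u)
    linarith
  have ha' : t ^ p / 2 ≤ a := by simp only [hadef]; linarith
  have hca : c * (t ^ p / 2) ≤ c * a := mul_le_mul_of_nonneg_left ha' hc0.le
  have : 1 + c * (t ^ p / 2) - δ ≤ ‖x + t • h‖ := by linarith
  linarith

end CLGAux


/-- A Banach space with a `1`-unconditional basis satisfying a lower `ℓ_p`-estimate with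
constant `1` is asymptotically `p`-uniformly convex. -/
theorem asympPUnifConvex_of_lowerEst
    {X : Type*} [NormedAddCommGroup X] [NormedSpace ℝ X] [CompleteSpace X]
    (p : ℝ) (hp : 1 < p) (B : CLG.UncondBasis X) (hB : B.LowerEst p) :
    CLG.AsympPUnifConvex X p := by
  have hp0 : (0:ℝ) < p := lt_trans one_pos hp
  have hc0 : (0:ℝ) < 2 ^ (1/p) - 1 := by
    have h1 : (2:ℝ) ^ (0:ℝ) < 2 ^ (1/p) :=
      Real.rpow_lt_rpow_of_exponent_lt (by norm_num) (by positivity)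
    rw [Real.rpow_zero] at h1
    linarith
  refine ⟨(2 ^ (1/p) - 1)/4, by linarith, ?_⟩
  intro t ht
  have hSne : Nonempty {x : X // ‖x‖ = 1} := by
    refine ⟨⟨‖B.e 0‖⁻¹ • B.e 0, ?_⟩⟩
    rw [norm_smul, norm_inv, norm_norm,
      inv_mul_cancel₀ (norm_ne_zero_iff.mpr (CLGAux.e_ne_zero B 0))]
  rw [CLG.aucModulus]
  refine le_ciInf ?_
  rintro ⟨x, hx⟩
  exact CLGAux.key p hp B hB t ht.1 ht.2 x hx
end
end

section
/- Let X be a Banach space with the p-Banach-Saks property for some p ∈ (1,∞), and assume X contains no isomorphic copy of ℓ₁. Then X has the alternating Banach-Saks property. -/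
open Filter Topology Metric Set Pointwise

noncomputable section

open CLG

/-!
By Rosenthal's `ℓ₁` theorem a bounded sequence `(xₙ)` in a space without a copy of `ℓ₁` has a
weakly Cauchy subsequence `(x_{σ n})`; Rosenthal's dichotomy rests on the Nash-Williams theorem,
proved by combinatorial forcing. The differences `yⱼ = x_{σ(2j+1)} - x_{σ(2j)}` are weakly null.
Either a subsequence of `(yⱼ)` tends to `0` in norm, or a tail of `(yⱼ)` is semi-normalized and the
`p`-Banach-Saks property bounds its blocks `[m, m')`, `m' ≤ 2m`, by `c (m' - m)^{1/p}`, hence its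
partial sums by `O(k^{1/p})`. Either way a subsequence of `(yⱼ)` has partial sums `o(k)`, and so
the signs `-1, +1, -1, +1, …` along `x_{σ(2wⱼ)}, x_{σ(2wⱼ+1)}` give Cesàro means tending to `0`.
-/

namespace NashWilliams

def Above (a : Finset ℕ) : Set ℕ := {x | ∀ y ∈ a, y < x}

lemma finite_compl_above (a : Finset ℕ) : (Above a)ᶜ.Finite :=
  (finite_Iic (a.sup id)).subset fun x hx => by
    simp only [Above, mem_compl_iff, mem_ofPred_eq, not_forall, not_lt] at hx
    obtain ⟨y, hy, hxy⟩ := hx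
    exact hxy.trans (Finset.le_sup (f := id) hy)

lemma _root_.Set.Infinite.inter_above {L : Set ℕ} (hL : L.Infinite) (a : Finset ℕ) :
    (L ∩ Above a).Infinite := by
  simpa only [sdiff_compl] using hL.sdiff (finite_compl_above a)

lemma above_anti {a b : Finset ℕ} (h : a ⊆ b) : Above b ⊆ Above a :=
  fun _ hx y hy => hx y (h hy)

def IsInitialSegment (a : Finset ℕ) (L : Set ℕ) : Prop :=
  ↑a ⊆ L ∧ L \ ↑a ⊆ Above a

variable (F : Set (Finset ℕ))

def Accepts (M : Set ℕ) (a : Finset ℕ) : Prop :=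
  ∀ L ⊆ M ∩ Above a, L.Infinite → ∃ b ∈ F, IsInitialSegment b (↑a ∪ L)

def Rejects (M : Set ℕ) (a : Finset ℕ) : Prop :=
  ∀ L ⊆ M, L.Infinite → ¬ Accepts F L a

def Decides (M : Set ℕ) (a : Finset ℕ) : Prop :=
  Accepts F M a ∨ Rejects F M a

variable {F} {M M' : Set ℕ} {a : Finset ℕ}

lemma accepts_of_mem (ha : a ∈ F) (M : Set ℕ) : Accepts F M a :=
  fun _ hL _ => ⟨a, ha, subset_union_left, fun _ hx => (hL (hx.1.resolve_left hx.2)).2⟩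

lemma Accepts.of_inter_above_subset (h : Accepts F M a) (hM : M' ∩ Above a ⊆ M) :
    Accepts F M' a :=
  fun L hL => h L fun _ hx => ⟨hM (hL hx), (hL hx).2⟩

lemma Rejects.of_inter_above_subset (h : Rejects F M a) (hM : M' ∩ Above a ⊆ M) :
    Rejects F M' a :=
  fun L hLM hL hacc => h (L ∩ Above a) (fun _ hx => hM ⟨hLM hx.1, hx.2⟩) (hL.inter_above a)
    (hacc.of_inter_above_subset fun _ hx => hx.1.1)

lemma Decides.of_inter_above_subset (h : Decides F M a) (hM : M' ∩ Above a ⊆ M) :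
    Decides F M' a :=
  h.imp (·.of_inter_above_subset hM) (·.of_inter_above_subset hM)

lemma Decides.mono (h : Decides F M a) (hM : M' ⊆ M) : Decides F M' a :=
  h.of_inter_above_subset (inter_subset_left.trans hM)

lemma exists_decides (hM : M.Infinite) (a : Finset ℕ) :
    ∃ M' ⊆ M, M'.Infinite ∧ Decides F M' a := by
  by_cases h : Rejects F M a
  · exact ⟨M, subset_rfl, hM, .inr h⟩
  · simp only [Rejects, not_forall, not_not] at h
    obtain ⟨M', hM', hinf, hacc⟩ := h
    exact ⟨M', hM', hinf, .inl hacc⟩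

lemma exists_decides_forall_mem (hM : M.Infinite) (T : Finset (Finset ℕ)) :
    ∃ M' ⊆ M, M'.Infinite ∧ ∀ a ∈ T, Decides F M' a := by
  classical
  induction T using Finset.induction_on with
  | empty => exact ⟨M, subset_rfl, hM, by simp⟩
  | insert a T _ ih =>
    obtain ⟨M₁, hM₁, hinf₁, hdec₁⟩ := ih
    obtain ⟨M₂, hM₂, hinf₂, hdec₂⟩ := exists_decides (F := F) hinf₁ a
    refine ⟨M₂, hM₂.trans hM₁, hinf₂, Finset.forall_mem_insert _ _ _ |>.mpr ⟨hdec₂, ?_⟩⟩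
    exact fun b hb => (hdec₁ b hb).mono hM₂

lemma exists_decides_forall_subset (hM : M.Infinite) :
    ∃ N ⊆ M, N.Infinite ∧ ∀ a : Finset ℕ, ↑a ⊆ N → Decides F N a := by
  have hstep (M : Set ℕ) (hM : M.Infinite) : ∃ M' ⊆ M ∩ Ioi (sInf M), M'.Infinite ∧
      ∀ a ⊆ Finset.range (sInf M + 1), Decides F M' a := by
    obtain ⟨M', hM', hinf, hdec⟩ := exists_decides_forall_mem (F := F)
      (hM.sdiff (finite_Iic (sInf M))) (Finset.range (sInf M + 1)).powerset
    refine ⟨M', fun x hx => ⟨(hM' hx).1, by simpa using (hM' hx).2⟩, hinf,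
      fun a ha => hdec a (Finset.mem_powerset.mpr ha)⟩
  choose! next hnext hinf hdec using hstep
  set C : ℕ → Set ℕ := fun k => next^[k] M
  have hC (k : ℕ) : C (k + 1) = next (C k) := Function.iterate_succ_apply' ..
  have hCinf (k : ℕ) : (C k).Infinite := by
    induction k with
    | zero => exact hM
    | succ k ih => rw [hC]; exact hinf _ ih
  have hCanti : Antitone C := antitone_nat_of_succ_le fun k =>
    hC k ▸ (hnext _ (hCinf k)).trans inter_subset_left
  -- `C (k + 2)` decides every subset of `[0, m k]`, and lies above `m k`.
  set m : ℕ → ℕ := fun k => sInf (C (k + 1))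
  have hmC (k : ℕ) : m k ∈ C (k + 1) := Nat.sInf_mem (hCinf _).nonempty
  have hm : StrictMono m := strictMono_nat_of_lt_succ fun k =>
    (hnext _ (hCinf (k + 1)) (hC (k + 1) ▸ hmC (k + 1))).2
  have hdecC (k : ℕ) : ∀ a ⊆ Finset.range (sInf (C k) + 1), Decides F (C (k + 1)) a :=
    hC k ▸ hdec _ (hCinf k)
  refine ⟨range m, range_subset_iff.mpr fun k => hCanti (Nat.zero_le _) (hmC k),
    infinite_range_of_injective hm.injective, fun a ha => ?_⟩
  rcases a.eq_empty_or_nonempty with rfl | hne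
  · refine (hdecC 0 ∅ (Finset.empty_subset _)).mono ?_
    exact range_subset_iff.mpr fun k => hCanti (Nat.le_add_left 1 k) (hmC k)
  obtain ⟨i, hi⟩ := ha (a.max'_mem hne)
  refine (hdecC (i + 1) a fun y hy => Finset.mem_range_succ_iff.mpr ?_).of_inter_above_subset ?_
  · exact (a.le_max' y hy).trans_eq hi.symm
  · rintro _ ⟨⟨k, rfl⟩, hk⟩
    have hik : i < k := hm.lt_iff_lt.mp (hi ▸ hk _ (a.max'_mem hne))
    exact hCanti (by omega) (hmC k)

lemma exists_strictMono_forall_image_range {I : Finset ℕ → Prop} (h₀ : I ∅)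
    (hstep : ∀ s, I s → ∃ n ∈ Above s, I (insert n s)) :
    ∃ q : ℕ → ℕ, StrictMono q ∧ ∀ k, I ((Finset.range k).image q) := by
  classical
  choose! g hgabove hg using hstep
  set s : ℕ → Finset ℕ := fun k => (fun t => insert (g t) t)^[k] ∅
  have hs (k : ℕ) : s (k + 1) = insert (g (s k)) (s k) := Function.iterate_succ_apply' ..
  have hIs (k : ℕ) : I (s k) := by
    induction k with
    | zero => exact h₀
    | succ k ih => rw [hs]; exact hg _ ih
  have himage (k : ℕ) : s k = (Finset.range k).image (g ∘ s) := by
    induction k with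
    | zero => rfl
    | succ k ih => rw [hs, Finset.range_add_one, Finset.image_insert, ← ih]; rfl
  refine ⟨g ∘ s, strictMono_nat_of_lt_succ fun k => ?_, fun k => himage k ▸ hIs k⟩
  exact hgabove _ (hIs (k + 1)) _ (hs k ▸ Finset.mem_insert_self _ _)

lemma exists_subset_image_range {q : ℕ → ℕ} (hq : q.Injective) {a : Finset ℕ}
    (ha : ↑a ⊆ range q) : ∃ k, a ⊆ (Finset.range k).image q := by
  obtain ⟨k, hk⟩ := (a.preimage q hq.injOn).exists_nat_subset_range
  refine ⟨k, fun x hx => ?_⟩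
  obtain ⟨i, rfl⟩ := ha hx
  exact Finset.mem_image_of_mem q (hk (Finset.mem_preimage.mpr hx))

lemma finite_not_rejects_insert (hdec : ∀ a : Finset ℕ, ↑a ⊆ M → Decides F M a)
    {a : Finset ℕ} (ha : ↑a ⊆ M) (hrej : Rejects F M a) :
    {n ∈ M ∩ Above a | ¬ Rejects F M (insert n a)}.Finite := by
  -- otherwise these `n` form an infinite subset of `M` accepting `a`
  by_contra hinf
  refine hrej _ (fun n hn => hn.1.1) hinf fun L hL hLinf => ?_
  set n := sInf L
  have hnL : n ∈ L := Nat.sInf_mem hLinf.nonempty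
  have hacc : Accepts F M (insert n a) := by
    have hsub : ↑(insert n a) ⊆ M := by
      rw [Finset.coe_insert]; exact insert_subset (hL hnL).1.1.1 ha
    exact (hdec _ hsub).resolve_right (hL hnL).1.2
  have hL' : L \ {n} ⊆ M ∩ Above (insert n a) := fun x hx => by
    refine ⟨(hL hx.1).1.1.1, fun y hy => ?_⟩
    rcases Finset.mem_insert.mp hy with rfl | hy
    · exact lt_of_le_of_ne (Nat.sInf_le hx.1) (Ne.symm hx.2)
    · exact (hL hx.1).2 y hy
  obtain ⟨b, hbF, hb⟩ := hacc _ hL' (hLinf.sdiff (finite_singleton n))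
  refine ⟨b, hbF, ?_⟩
  convert hb using 1
  ext x
  by_cases hx : x = n
  · subst hx; simp [hnL]
  · simp [hx]

lemma exists_rejects_forall_subset (hM : M.Infinite)
    (hdec : ∀ a : Finset ℕ, ↑a ⊆ M → Decides F M a) (hrej : Rejects F M ∅) :
    ∃ N ⊆ M, N.Infinite ∧ ∀ a : Finset ℕ, ↑a ⊆ N → a ∉ F := by
  classical
  obtain ⟨q, hq, hqI⟩ := exists_strictMono_forall_image_range
      (I := fun s => ↑s ⊆ M ∧ ∀ b ⊆ s, Rejects F M b)
      ⟨by simp, fun b hb => Finset.subset_empty.mp hb ▸ hrej⟩ fun s ⟨hsM, hsrej⟩ => by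
    set bad := ⋃ b ∈ s.powerset, {n ∈ M ∩ Above b | ¬ Rejects F M (insert n b)}
    have hbad : bad.Finite := s.powerset.finite_toSet.biUnion fun b hb =>
      have hbs := Finset.mem_powerset.mp hb
      finite_not_rejects_insert hdec ((Finset.coe_subset.mpr hbs).trans hsM) (hsrej b hbs)
    obtain ⟨n, ⟨hnM, hns⟩, hnbad⟩ := ((hM.inter_above s).sdiff hbad).nonempty
    refine ⟨n, hns, by simpa using insert_subset hnM hsM, fun b hb => ?_⟩
    by_cases hnb : n ∈ b
    · have hbs : b.erase n ⊆ s := fun x hx => by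
        simpa [Finset.ne_of_mem_erase hx] using hb (Finset.mem_of_mem_erase hx)
      rw [← Finset.insert_erase hnb]
      by_contra hnrej
      refine hnbad (mem_iUnion₂.mpr ⟨_, Finset.mem_powerset.mpr hbs, ⟨hnM, ?_⟩, hnrej⟩)
      exact above_anti hbs hns
    · exact hsrej b fun x hx => by
        simpa [show x ≠ n from fun h => hnb (h ▸ hx)] using hb hx
  refine ⟨range q, range_subset_iff.mpr fun k => ?_, infinite_range_of_injective hq.injective,
    fun a ha haF => ?_⟩
  · exact (hqI (k + 1)).1 (Finset.mem_image_of_mem q (Finset.self_mem_range_succ k))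
  · obtain ⟨k, hk⟩ := exists_subset_image_range hq.injective ha
    exact (hqI k).2 a hk M subset_rfl hM (accepts_of_mem haF M)

/-- The Nash-Williams theorem. -/
theorem exists_subset_avoids_or_initialSegment (F : Set (Finset ℕ)) (hM : M.Infinite) :
    ∃ N ⊆ M, N.Infinite ∧ ((∀ a : Finset ℕ, ↑a ⊆ N → a ∉ F) ∨
      ∀ L ⊆ N, L.Infinite → ∃ a ∈ F, IsInitialSegment a L) := by
  obtain ⟨N, hNM, hN, hdec⟩ := exists_decides_forall_subset (F := F) hM
  rcases hdec ∅ (by simp) with hacc | hrej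
  · refine ⟨N, hNM, hN, .inr fun L hL hLinf => ?_⟩
    simpa [Above] using hacc L (by simpa [Above] using hL) hLinf
  · obtain ⟨N', hN'N, hN', havoid⟩ := exists_rejects_forall_subset hN hdec hrej
    exact ⟨N', hN'N.trans hNM, hN', .inl havoid⟩

end NashWilliams

namespace Rosenthal

open NashWilliams

variable {S : Type*} (A B : ℕ → Set S)

/-- `(a.filter (· < n)).card` is the position of `n` in `a`: `t` lies in `A` at the even and in
`B` at the odd positions of `a`. -/
def AltMem (t : S) (a : Finset ℕ) : Prop :=
  ∀ n ∈ a, t ∈ if Even (a.filter (· < n)).card then A n else B n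

def BooleanIndependent : Prop :=
  ∀ (k : ℕ) (η : ℕ → Prop), ∃ t, ∀ j < k, (η j → t ∈ A j) ∧ (¬ η j → t ∈ B j)

variable {A B}

lemma card_filter_lt_apply {π : ℕ → ℕ} (hπ : StrictMono π) {a : Finset ℕ} (ha : ↑a ⊆ range π)
    (hdown : ∀ i j, j < i → π i ∈ a → π j ∈ a) {i : ℕ} (hi : π i ∈ a) :
    (a.filter (· < π i)).card = i := by
  have : a.filter (· < π i) = (Finset.range i).image π := by
    ext x
    simp only [Finset.mem_filter, Finset.mem_image, Finset.mem_range]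
    constructor
    · rintro ⟨hx, hlt⟩
      obtain ⟨j, rfl⟩ := ha hx
      exact ⟨j, hπ.lt_iff_lt.mp hlt, rfl⟩
    · rintro ⟨j, hj, rfl⟩
      exact ⟨hdown i j hj hi, hπ hj⟩
  rw [this, Finset.card_image_of_injective _ hπ.injective, Finset.card_range]

lemma altMem_iff {π : ℕ → ℕ} (hπ : StrictMono π) {a : Finset ℕ} (ha : ↑a ⊆ range π)
    (hdown : ∀ i j, j < i → π i ∈ a → π j ∈ a) {t : S} :
    AltMem A B t a ↔ ∀ i, π i ∈ a → t ∈ if Even i then A (π i) else B (π i) := by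
  refine ⟨fun h i hi => ?_, fun h n hn => ?_⟩
  · simpa only [card_filter_lt_apply hπ ha hdown hi] using h _ hi
  · obtain ⟨i, rfl⟩ := ha hn
    simpa only [card_filter_lt_apply hπ ha hdown hn] using h i hn

/-- Each `σ j` is the middle one of three consecutive elements of `N`; adding the first or the last
of them puts `σ j` at an even or at an odd position. -/
lemma exists_independent_of_forall_altMem {N : Set ℕ} (hN : N.Infinite)
    (h : ∀ a : Finset ℕ, ↑a ⊆ N → ∃ t, AltMem A B t a) :
    ∃ σ : ℕ → ℕ, StrictMono σ ∧ BooleanIndependent (A ∘ σ) (B ∘ σ) := by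
  classical
  set m := Nat.nth (· ∈ N)
  have hm : StrictMono m := Nat.nth_strictMono hN
  refine ⟨fun j => m (3 * j + 1), hm.comp fun i j h => by omega, fun k η => ?_⟩
  set g : ℕ → ℕ := fun i => 3 * (i / 2) + i % 2 + if η (i / 2) then 1 else 0
  have hg (j : ℕ) : g (2 * j) = 3 * j + (if η j then 1 else 0) ∧
      g (2 * j + 1) = 3 * j + 1 + (if η j then 1 else 0) := by
    have h₁ : 2 * j / 2 = j := by omega
    have h₂ : (2 * j + 1) / 2 = j := by omega
    simp only [g, h₁, h₂]
    omega
  have hgmono : StrictMono g := strictMono_nat_of_lt_succ fun i => by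
    obtain ⟨j, rfl | rfl⟩ := Nat.even_or_odd' i
    · rw [(hg j).1, (hg j).2]; omega
    · rw [(hg j).2, show 2 * j + 1 + 1 = 2 * (j + 1) by ring, (hg (j + 1)).1]
      split_ifs <;> omega
  have hπ : StrictMono (m ∘ g) := hm.comp hgmono
  set a := (Finset.range (2 * k)).image (m ∘ g)
  have hmem {i : ℕ} : (m ∘ g) i ∈ a ↔ i < 2 * k :=
    hπ.injective.mem_finset_image.trans Finset.mem_range
  obtain ⟨t, ht⟩ := h a fun x hx => by
    obtain ⟨i, -, rfl⟩ := Finset.mem_image.mp hx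
    exact Nat.nth_mem_of_infinite hN _
  rw [altMem_iff hπ (by rw [Finset.coe_image]; exact image_subset_range _ _) fun i j hji hi =>
    hmem.mpr ((hmem.mp hi).trans' hji)] at ht
  refine ⟨t, fun j hj => ⟨fun hη => ?_, fun hη => ?_⟩⟩
  · have := ht (2 * j) (hmem.mpr (by omega))
    simpa [(hg j).1, hη] using this
  · have := ht (2 * j + 1) (hmem.mpr (by omega))
    simpa [(hg j).2, hη, Nat.not_even_bit1] using this

lemma finite_or_finite_of_forall_initialSegment {N : Set ℕ}
    (h : ∀ L ⊆ N, L.Infinite → ∃ a, (¬ ∃ t, AltMem A B t a) ∧ IsInitialSegment a L) (t : S) :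
    {n ∈ N | t ∈ A n}.Finite ∨ {n ∈ N | t ∈ B n}.Finite := by
  by_contra! hinf
  obtain ⟨ν, hν, hνN⟩ := extraction_forall_of_frequently
    (P := fun i n => n ∈ if Even i then {n ∈ N | t ∈ A n} else {n ∈ N | t ∈ B n})
    fun i => Nat.frequently_atTop_iff_infinite.mpr (by split_ifs <;> simp [hinf])
  have hνN' (i : ℕ) : ν i ∈ N ∧ t ∈ if Even i then A (ν i) else B (ν i) := by
    have := hνN i; split_ifs at this ⊢ <;> exact this
  obtain ⟨a, hnot, hinit⟩ := h (range ν) (range_subset_iff.mpr fun i => (hνN' i).1)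
    (infinite_range_of_injective hν.injective)
  have hdown (i j : ℕ) (hji : j < i) (hi : ν i ∈ a) : ν j ∈ a := by
    by_contra hj
    exact (hν hji).not_gt (hinit.2 ⟨mem_range_self j, hj⟩ _ hi)
  exact hnot ⟨t, (altMem_iff hν hinit.1 hdown).mpr fun i _ => (hνN' i).2⟩

variable (A B) in
theorem exists_finite_or_independent {M : Set ℕ} (hM : M.Infinite) :
    (∃ N ⊆ M, N.Infinite ∧ ∀ t, {n ∈ N | t ∈ A n}.Finite ∨ {n ∈ N | t ∈ B n}.Finite) ∨
    ∃ σ : ℕ → ℕ, StrictMono σ ∧ BooleanIndependent (A ∘ σ) (B ∘ σ) := by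
  obtain ⟨N, hNM, hN, hF⟩ :=
    exists_subset_avoids_or_initialSegment {a | ¬ ∃ t, AltMem A B t a} hM
  rcases hF with hF | hF
  · exact .inr (exists_independent_of_forall_altMem hN fun a ha => not_not.mp (hF a ha))
  · exact .inl ⟨N, hNM, hN, finite_or_finite_of_forall_initialSegment hF⟩

lemma finite_sep_of_finite_sdiff {α : Type*} {M N : Set α} {p : α → Prop}
    (h : {n ∈ M | p n}.Finite) (hNM : (N \ M).Finite) : {n ∈ N | p n}.Finite :=
  (h.union hNM).subset fun n hn => by
    by_cases hnM : n ∈ M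
    · exact .inl ⟨hnM, hn.2⟩
    · exact .inr ⟨hn.1, hnM⟩

lemma exists_infinite_subset_forall_of_finite_sdiff {P : ℕ → Set ℕ → Prop}
    (hP : ∀ k M, M.Infinite → ∃ N ⊆ M, N.Infinite ∧ P k N)
    (hfin : ∀ k M N, P k M → (N \ M).Finite → P k N) {M : Set ℕ} (hM : M.Infinite) :
    ∃ N ⊆ M, N.Infinite ∧ ∀ k, P k N := by
  choose! next hnext hinf hPnext using hP
  set C : ℕ → Set ℕ := fun k => Nat.rec M next k
  have hCinf (k : ℕ) : (C k).Infinite := by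
    induction k with
    | zero => exact hM
    | succ k ih => exact hinf k _ ih
  have hCanti : Antitone C := antitone_nat_of_succ_le fun k => hnext k _ (hCinf k)
  choose d hdC hd using fun k => (hCinf (k + 1)).exists_gt k
  refine ⟨range d, range_subset_iff.mpr fun k => hCanti (Nat.zero_le (k + 1)) (hdC k),
    infinite_of_forall_exists_gt fun k => ⟨d k, mem_range_self k, hd k⟩,
    fun k => hfin k _ _ (hPnext k _ (hCinf k)) (((finite_Iio k).image d).subset ?_)⟩
  rintro _ ⟨⟨j, rfl⟩, hj⟩
  refine ⟨j, mem_Iio.mpr ?_, rfl⟩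
  by_contra hjk
  exact hj (hCanti (by omega : k + 1 ≤ j + 1) (hdC j))

/-- Rosenthal's dichotomy. -/
theorem exists_tendsto_or_independent (f : ℕ → S → ℝ)
    (hf : ∀ t, ∃ C, ∀ n, |f n t| ≤ C) :
    (∃ σ : ℕ → ℕ, StrictMono σ ∧ ∀ t, ∃ l, Tendsto (fun n => f (σ n) t) atTop (𝓝 l)) ∨
    ∃ r s : ℝ, r < s ∧ ∃ σ : ℕ → ℕ, StrictMono σ ∧
      BooleanIndependent (fun j => {t | f (σ j) t < r}) (fun j => {t | s < f (σ j) t}) := by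
  by_cases hind : ∃ r s : ℝ, r < s ∧ ∃ σ : ℕ → ℕ, StrictMono σ ∧
      BooleanIndependent (fun j => {t | f (σ j) t < r}) (fun j => {t | s < f (σ j) t})
  · exact .inr hind
  refine .inl ?_
  obtain ⟨e, he⟩ := exists_surjective_nat (ℚ × ℚ)
  set P : ℕ → Set ℕ → Prop := fun k N => (e k).1 < (e k).2 →
    ∀ t, {n ∈ N | f n t < (e k).1}.Finite ∨ {n ∈ N | ((e k).2 : ℝ) < f n t}.Finite
  have hP (k : ℕ) (M : Set ℕ) (hM : M.Infinite) : ∃ N ⊆ M, N.Infinite ∧ P k N := by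
    rcases exists_finite_or_independent (fun n => {t | f n t < (e k).1})
      (fun n => {t | ((e k).2 : ℝ) < f n t}) hM with ⟨N, hNM, hN, hfin⟩ | ⟨σ, hσ, hσind⟩
    · exact ⟨N, hNM, hN, fun _ => hfin⟩
    · exact ⟨M, subset_rfl, hM, fun hlt => (hind ⟨_, _, Rat.cast_lt.mpr hlt, σ, hσ, hσind⟩).elim⟩
  have hPfin (k : ℕ) (M N : Set ℕ) (hM : P k M) (hNM : (N \ M).Finite) : P k N :=
    fun hlt t => (hM hlt t).imp (finite_sep_of_finite_sdiff · hNM)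
      (finite_sep_of_finite_sdiff · hNM)
  obtain ⟨D, -, hD, hDP⟩ := exists_infinite_subset_forall_of_finite_sdiff hP hPfin infinite_univ
  set σ := Nat.nth (· ∈ D)
  have hσ : StrictMono σ := Nat.nth_strictMono hD
  refine ⟨σ, hσ, fun t => ?_⟩
  obtain ⟨C, hC⟩ := hf t
  refine tendsto_of_no_upcrossings Rat.denseRange_cast ?_
    (isBoundedUnder_of ⟨C, fun n => (abs_le.mp (hC _)).2⟩)
    (isBoundedUnder_of ⟨-C, fun n => (abs_le.mp (hC _)).1⟩)
  rintro _ ⟨r, rfl⟩ _ ⟨s, rfl⟩ hrs ⟨hr, hs⟩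
  obtain ⟨k, hk⟩ := he (r, s)
  have hfin (p : ℝ → Prop) (h : {n ∈ D | p (f n t)}.Finite) : {n | p (f (σ n) t)}.Finite :=
    (h.preimage hσ.injective.injOn).subset fun n hn => ⟨Nat.nth_mem_of_infinite hD n, hn⟩
  have hgap := hDP k
  simp only [P, hk] at hgap
  rcases hgap (Rat.cast_lt.mp hrs) t with h | h
  · exact Nat.frequently_atTop_iff_infinite.mp hr (hfin (· < (r : ℝ)) h)
  · exact Nat.frequently_atTop_iff_infinite.mp hs (hfin ((s : ℝ) < ·) h)

end Rosenthal

def interleave (w : ℕ → ℕ) (j : ℕ) : ℕ := 2 * w (j / 2) + j % 2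

@[simp] lemma interleave_two_mul (w : ℕ → ℕ) (i : ℕ) : interleave w (2 * i) = 2 * w i := by
  simp only [interleave, show 2 * i / 2 = i by omega]
  omega

@[simp] lemma interleave_two_mul_add_one (w : ℕ → ℕ) (i : ℕ) :
    interleave w (2 * i + 1) = 2 * w i + 1 := by
  simp only [interleave, show (2 * i + 1) / 2 = i by omega]
  omega

lemma StrictMono.interleave {w : ℕ → ℕ} (hw : StrictMono w) : StrictMono (interleave w) :=
  strictMono_nat_of_lt_succ fun j => by
    obtain ⟨i, rfl | rfl⟩ := Nat.even_or_odd' j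
    · simp
    · rw [interleave_two_mul_add_one, show 2 * i + 1 + 1 = 2 * (i + 1) by ring,
        interleave_two_mul]
      have := hw i.lt_add_one
      omega

section Asymptotics

open Asymptotics

lemma isLittleO_rpow_id_atTop {α : ℝ} (hα : α < 1) : (fun x : ℝ => x ^ α) =o[atTop] id := by
  refine (isLittleO_iff_tendsto' ((eventually_gt_atTop 0).mono fun x hx h => ?_)).mpr ?_
  · exact absurd h hx.ne'
  · refine (tendsto_rpow_neg_atTop (sub_pos.mpr hα)).congr' ?_
    filter_upwards [eventually_gt_atTop 0] with x hx
    rw [neg_sub, Real.rpow_sub_one hx.ne', id]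

lemma isLittleO_natCast_of_norm_le_rpow {E : Type*} [SeminormedAddCommGroup E] {T : ℕ → E}
    {A B α : ℝ} (hα : α < 1) (hT : ∀ k, ‖T k‖ ≤ A + B * (k : ℝ) ^ α) :
    T =o[atTop] (fun k => (k : ℝ)) := by
  refine (isBigO_of_le _ fun k => (hT k).trans (Real.le_norm_self _)).trans_isLittleO ?_
  exact ((isLittleO_const_id_atTop A).add
    ((isLittleO_rpow_id_atTop hα).const_mul_left B)).natCast_atTop

lemma norm_sum_range_le_of_block {E : Type*} [SeminormedAddCommGroup E] {z : ℕ → E} {c α : ℝ}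
    (hα : 0 < α) (hc : 0 ≤ c)
    (hblock : ∀ m m', m ≤ m' → m' ≤ 2 * m →
      ‖∑ j ∈ Finset.Ico m m', z j‖ ≤ c * ((m' - m : ℕ) : ℝ) ^ α) (k : ℕ) :
    ‖∑ j ∈ Finset.range k, z j‖ ≤ ‖z 0‖ + c / (1 - (3 / 4 : ℝ) ^ α) * (k : ℝ) ^ α := by
  set θ : ℝ := (3 / 4 : ℝ) ^ α
  have hθ : θ < 1 := Real.rpow_lt_one (by norm_num) (by norm_num) hα
  set B := c / (1 - θ)
  have hB : 0 ≤ B := div_nonneg hc (sub_nonneg.mpr hθ.le)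
  have hBθ : B * θ + c = B := by
    rw [div_mul_eq_mul_div, div_add' _ _ _ (sub_pos.mpr hθ).ne']
    congr 1
    ring
  induction k using Nat.strong_induction_on with
  | _ k ih =>
  rcases lt_or_ge k 2 with hk | hk
  · interval_cases k <;> simp [Real.zero_rpow hα.ne', hB]
  -- split `[0, k)` at `q = ⌈k / 2⌉ ≤ 3k / 4`; `B` is chosen so that `B θ + c = B`
  set q := (k + 1) / 2
  have hqk : (q : ℝ) ≤ 3 / 4 * k := by
    have : 4 * q ≤ 3 * k := by omega
    have : (4 : ℝ) * q ≤ 3 * k := by exact_mod_cast this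
    linarith
  calc ‖∑ j ∈ Finset.range k, z j‖
      = ‖∑ j ∈ Finset.range q, z j + ∑ j ∈ Finset.Ico q k, z j‖ := by
        rw [Finset.sum_range_add_sum_Ico _ (by omega)]
    _ ≤ (‖z 0‖ + B * (q : ℝ) ^ α) + c * ((k - q : ℕ) : ℝ) ^ α :=
        (norm_add_le _ _).trans (add_le_add (ih q (by omega)) (hblock q k (by omega) (by omega)))
    _ ≤ (‖z 0‖ + B * (θ * (k : ℝ) ^ α)) + c * (k : ℝ) ^ α := by
        rw [← Real.mul_rpow (by norm_num) (Nat.cast_nonneg k)]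
        gcongr
        exact_mod_cast Nat.sub_le k q
    _ = ‖z 0‖ + B * (k : ℝ) ^ α := by linear_combination (k : ℝ) ^ α * hBθ

lemma isLittleO_sum_neg_one_pow_smul {E : Type*} [NormedAddCommGroup E] [NormedSpace ℝ E]
    {z : ℕ → E} {b : ℝ} (hz : ∀ n, ‖z n‖ ≤ b)
    (h : (fun m => ∑ i ∈ Finset.range m, (z (2 * i + 1) - z (2 * i))) =o[atTop]
      (fun m => (m : ℝ))) :
    (fun k => ∑ j ∈ Finset.range k, (-1 : ℝ) ^ (j + 1) • z j) =o[atTop] (fun k => (k : ℝ)) := by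
  set S := fun m => ∑ i ∈ Finset.range m, (z (2 * i + 1) - z (2 * i))
  set T := fun k => ∑ j ∈ Finset.range k, (-1 : ℝ) ^ (j + 1) • z j
  have hT (m : ℕ) : T (2 * m) = S m := by
    induction m with
    | zero => simp [S, T]
    | succ m ih =>
      simp only [S, T] at ih ⊢
      rw [show 2 * (m + 1) = 2 * m + 1 + 1 by ring, Finset.sum_range_succ, Finset.sum_range_succ,
        Finset.sum_range_succ, ih, (odd_two_mul_add_one m).neg_one_pow,
        Even.neg_one_pow ⟨m + 1, by ring⟩, neg_one_smul, one_smul]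
      abel
  have hdiff (k : ℕ) : ‖T k - S (k / 2)‖ ≤ b := by
    obtain ⟨m, rfl | rfl⟩ := Nat.even_or_odd' k
    · simpa [hT] using (norm_nonneg _).trans (hz 0)
    · have : (2 * m + 1) / 2 = m := by omega
      simpa [this, T, Finset.sum_range_succ, ← hT, pow_succ, pow_mul] using hz (2 * m)
  have hS : (fun k => S (k / 2)) =o[atTop] (fun k => (k : ℝ)) :=
    (h.comp_tendsto (Nat.tendsto_div_const_atTop two_ne_zero)).trans_isBigO
      (isBigO_of_le _ fun k => by simpa using Nat.div_le_self k 2)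
  have hR : (fun k => T k - S (k / 2)) =o[atTop] (fun k => (k : ℝ)) :=
    (isBigO_of_le' (c := b) (g := fun _ => (1 : ℝ)) _ fun k => by simpa using hdiff k)
      |>.trans_isLittleO (isLittleO_const_id_atTop (1 : ℝ)).natCast_atTop
  simpa using hR.add hS

end Asymptotics

section BanachSpace

open Asymptotics

variable {X : Type*} [NormedAddCommGroup X] [NormedSpace ℝ X]

/-- Test `∑ aᵢ xᵢ` against `t₁ - t₂`, where `t₁` follows the sign pattern of the `aᵢ` and `t₂` the
opposite one. -/
lemma containsL1Copy_of_booleanIndependent {x : ℕ → X} {b : ℝ} (hx : ∀ n, ‖x n‖ ≤ b) {r s : ℝ}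
    (hrs : r < s) (hind : Rosenthal.BooleanIndependent
      (fun n => {φ : {φ : X →L[ℝ] ℝ // ‖φ‖ ≤ 1} | φ.1 (x n) < r})
      (fun n => {φ : {φ : X →L[ℝ] ℝ // ‖φ‖ ≤ 1} | s < φ.1 (x n)})) :
    ContainsL1Copy X := by
  have hb : 0 ≤ b := (norm_nonneg _).trans (hx 0)
  refine ⟨x, (s - r) / 2, b + 1, by linarith, by linarith, fun k a => ⟨?_, ?_⟩⟩
  · set η : ℕ → Prop := fun j => ∀ h : j < k, a ⟨j, h⟩ < 0
    obtain ⟨t₁, ht₁⟩ := hind k η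
    obtain ⟨t₂, ht₂⟩ := hind k (¬ η ·)
    have hterm (i : Fin k) : |a i| * (s - r) ≤ a i * (t₁.1 (x i) - t₂.1 (x i)) := by
      by_cases hai : a i < 0
      · have hη : η i := fun _ => hai
        have h₁ : t₁.1 (x i) < r := (ht₁ i i.2).1 hη
        have h₂ : s < t₂.1 (x i) := (ht₂ i i.2).2 (not_not.mpr hη)
        rw [abs_of_neg hai]
        nlinarith
      · have hη : ¬ η i := fun h => hai (h i.2)
        have h₁ : s < t₁.1 (x i) := (ht₁ i i.2).2 hη
        have h₂ : t₂.1 (x i) < r := (ht₂ i i.2).1 hη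
        rw [abs_of_nonneg (not_lt.mp hai)]
        nlinarith
    set v := ∑ i, a i • x i
    have hnorm : ‖t₁.1 - t₂.1‖ ≤ 2 := (norm_sub_le _ _).trans (by linarith [t₁.2, t₂.2])
    calc (s - r) / 2 * ∑ i, |a i| = (∑ i, |a i| * (s - r)) / 2 := by
          rw [← Finset.sum_mul]; ring
      _ ≤ (∑ i, a i * (t₁.1 (x i) - t₂.1 (x i))) / 2 := by
          gcongr ?_ / _
          exact Finset.sum_le_sum fun i _ => hterm i
      _ = (t₁.1 - t₂.1) v / 2 := by simp [v, map_sum, mul_sub]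
      _ ≤ ‖t₁.1 - t₂.1‖ * ‖v‖ / 2 := by
          gcongr; exact (le_abs_self _).trans ((t₁.1 - t₂.1).le_opNorm v)
      _ ≤ ‖v‖ := by nlinarith [norm_nonneg v]
  · calc ‖∑ i, a i • x i‖ ≤ ∑ i, |a i| * (b + 1) := (norm_sum_le _ _).trans <|
          Finset.sum_le_sum fun i _ => by
            rw [norm_smul, Real.norm_eq_abs]; gcongr; linarith [hx i]
      _ = (b + 1) * ∑ i, |a i| := by rw [← Finset.sum_mul, mul_comm]

/-- Rosenthal's `ℓ₁` theorem. -/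
theorem exists_weakCauchy_subseq_of_not_containsL1Copy (hl1 : ¬ ContainsL1Copy X) {x : ℕ → X}
    {b : ℝ} (hx : ∀ n, ‖x n‖ ≤ b) :
    ∃ σ : ℕ → ℕ, StrictMono σ ∧
      ∀ φ : X →L[ℝ] ℝ, ∃ l, Tendsto (fun n => φ (x (σ n))) atTop (𝓝 l) := by
  have hbound (φ : {φ : X →L[ℝ] ℝ // ‖φ‖ ≤ 1}) (n : ℕ) : |φ.1 (x n)| ≤ b := by
    rw [← Real.norm_eq_abs]
    exact (φ.1.le_opNorm _).trans (mul_le_of_le_one_left (norm_nonneg _) φ.2 |>.trans (hx n))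
  rcases Rosenthal.exists_tendsto_or_independent
      (fun n (φ : {φ : X →L[ℝ] ℝ // ‖φ‖ ≤ 1}) => φ.1 (x n)) (fun φ => ⟨b, hbound φ⟩) with
    ⟨σ, hσ, hconv⟩ | ⟨r, s, hrs, σ, -, hind⟩
  · refine ⟨σ, hσ, fun φ => ?_⟩
    set c := ‖φ‖ + 1
    have hc : 0 < c := by positivity
    have hψ : ‖c⁻¹ • φ‖ ≤ 1 := by
      rw [norm_smul, norm_inv, Real.norm_of_nonneg hc.le, inv_mul_le_iff₀ hc]
      linarith
    obtain ⟨l, hl⟩ := hconv ⟨c⁻¹ • φ, hψ⟩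
    refine ⟨c * l, (hl.const_mul c).congr fun n => ?_⟩
    simp [mul_inv_cancel_left₀ hc.ne']
  · exact (hl1 (containsL1Copy_of_booleanIndependent (fun n => hx (σ n)) hrs hind)).elim

variable {p : ℝ}

lemma PBanachSaks.exists_subseq_sum_isLittleO_of_semiNormalized (hp : 1 < p)
    (hBS : PBanachSaks X p) {y : ℕ → X} (hsn : SemiNormalized y) (hy : WeaklyNull y) :
    ∃ w : ℕ → ℕ, StrictMono w ∧
      (fun m => ∑ j ∈ Finset.range m, y (w j)) =o[atTop] (fun m => (m : ℝ)) := by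
  obtain ⟨w, hw, c, hc, hbound⟩ := hBS y hsn hy
  have hblock (m m' : ℕ) (h₁ : m ≤ m') (h₂ : m' ≤ 2 * m) :
      ‖∑ j ∈ Finset.Ico m m', y (w j)‖ ≤ c * ((m' - m : ℕ) : ℝ) ^ (1 / p) := by
    rw [Finset.sum_Ico_eq_sum_range, ← Fin.sum_univ_eq_sum_range (fun i => y (w (m + i)))]
    exact hbound (m' - m) (fun i => m + i) (fun i j h => by simpa using h) fun i => by omega
  have hp' : 1 / p < 1 := (div_lt_one (by linarith)).mpr hp
  exact ⟨w, hw, isLittleO_natCast_of_norm_le_rpow hp'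
    (norm_sum_range_le_of_block (by positivity) hc.le hblock)⟩

theorem PBanachSaks.exists_subseq_sum_isLittleO (hp : 1 < p) (hBS : PBanachSaks X p) {y : ℕ → X}
    (hy : WeaklyNull y) {b : ℝ} (hb : ∀ n, ‖y n‖ ≤ b) :
    ∃ w : ℕ → ℕ, StrictMono w ∧
      (fun m => ∑ j ∈ Finset.range m, y (w j)) =o[atTop] (fun m => (m : ℝ)) := by
  by_cases h₀ : MapClusterPt (0 : X) atTop y
  · obtain ⟨w, hw, hlim⟩ := h₀.tendsto_subseq
    exact ⟨w, hw, isLittleO_sum_range_of_tendsto_zero hlim⟩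
  obtain ⟨ε, hε, hfar⟩ : ∃ ε > 0, ∀ᶠ n in atTop, ε ≤ ‖y n‖ := by
    rw [mapClusterPt_iff_frequently] at h₀
    push Not at h₀
    obtain ⟨s, hs, hev⟩ := h₀
    obtain ⟨ε, hε, hball⟩ := Metric.mem_nhds_iff.mp hs
    exact ⟨ε, hε, hev.mono fun n hn => not_lt.mp fun h => hn (hball (mem_ball_zero_iff.mpr h))⟩
  obtain ⟨N, hN⟩ := eventually_atTop.mp hfar
  obtain ⟨w, hw, hsum⟩ := PBanachSaks.exists_subseq_sum_isLittleO_of_semiNormalized hp hBS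
    (y := fun n => y (n + N)) ⟨ε, b, hε, fun n => ⟨hN _ (by omega), hb _⟩⟩
    fun φ => (hy φ).comp (tendsto_add_atTop_nat N)
  exact ⟨(· + N) ∘ w, fun i j h => Nat.add_lt_add_right (hw h) N, hsum⟩

end BanachSpace

theorem altBanachSaks_of_pBanachSaks_general
    {X : Type*} [NormedAddCommGroup X] [NormedSpace ℝ X]
    (p : ℝ) (hp : 1 < p) (hBS : CLG.PBanachSaks X p) (hl1 : ¬ CLG.ContainsL1Copy X) :
    CLG.AltBanachSaks X := by
  rintro x ⟨b, hb⟩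
  obtain ⟨σ, hσ, hcauchy⟩ := exists_weakCauchy_subseq_of_not_containsL1Copy hl1 hb
  set y : ℕ → X := fun j => x (σ (2 * j + 1)) - x (σ (2 * j))
  have hy : WeaklyNull y := fun φ => by
    obtain ⟨l, hl⟩ := hcauchy φ
    simpa [y] using
      (hl.comp (tendsto_atTop_mono (fun j => show j ≤ 2 * j + 1 by omega) tendsto_id)).sub
        (hl.comp (tendsto_atTop_mono (fun j => show j ≤ 2 * j by omega) tendsto_id))
  obtain ⟨w, hw, hsum⟩ := PBanachSaks.exists_subseq_sum_isLittleO hp hBS hy (b := 2 * b) fun j =>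
    (norm_sub_le _ _).trans (by linarith [hb (σ (2 * j + 1)), hb (σ (2 * j))])
  refine ⟨σ ∘ interleave w, hσ.comp hw.interleave, fun j => (-1) ^ (j + 1),
    fun j => neg_one_pow_eq_or ℝ _, 0, ?_⟩
  refine (isLittleO_sum_neg_one_pow_smul (z := x ∘ σ ∘ interleave w) (fun n => hb _) ?_)
    |>.tendsto_inv_smul_nhds_zero
  simpa [y] using hsum

/-- A Banach space with the `p`-Banach-Saks property (`1 < p < ∞`) containing no copy of
`ℓ₁` has the alternating Banach-Saks property. -/
theorem altBanachSaks_of_pBanachSaks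
    {X : Type*} [NormedAddCommGroup X] [NormedSpace ℝ X] [CompleteSpace X]
    (p : ℝ) (hp : 1 < p) (hBS : CLG.PBanachSaks X p) (hl1 : ¬ CLG.ContainsL1Copy X) :
    CLG.AltBanachSaks X :=
  altBanachSaks_of_pBanachSaks_general p hp hBS hl1
end
end

section
/- Every reflexive asymptotically uniformly smooth Banach space has the Banach-Saks property. -/
open Filter Topology Metric Set Pointwise

noncomputable section

open CLG

/-!
Reflexivity reduces the Banach-Saks property to weakly null sequences: a bounded sequence has a
weakly convergent subsequence (sequential Banach-Alaoglu in the bidual of its closed span, which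
is separable and reflexive), and the Cesàro means of `x (φ n)` are `L` plus those of the weakly
null sequence `x (φ n) - L`.

For a weakly null sequence `z` bounded by `b`, asymptotic uniform smoothness gives, for each
`ε > 0`, a radius `R` such that any vector `S` can be continued by a far-out term with
`‖S + z j‖ ≤ max R (‖S‖ + ε)`: once `‖S‖` is large, `z j` is almost in a finite-codimensional
subspace along which the norm grows at rate `ε` from `S`. Choosing the terms greedily, with
`ε → 0` slowly enough that `R(ε) = o(k)`, the partial sums grow sublinearly.
-/

namespace CLG

open NormedSpace TopologicalSpace

theorem exists_monotone_tendsto_atTop_eventually_mul_le (f : ℕ → ℝ) :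
    ∃ m : ℕ → ℕ, Monotone m ∧ Tendsto m atTop atTop ∧
      ∀ᶠ k in atTop, ((m k : ℝ) + 1) * f (m k) ≤ k := by
  let P (k n : ℕ) : Prop := ((n : ℝ) + 1) * f n ≤ k
  have hP : ∀ {k k' n}, k ≤ k' → P k n → P k' n := fun hk h =>
    h.trans (by exact_mod_cast hk)
  refine ⟨fun k => Nat.findGreatest (P k) k, fun k k' hk => ?_, ?_, ?_⟩
  · exact Nat.findGreatest_mono (fun n => hP hk) hk
  · refine tendsto_atTop_atTop.2 fun N => ⟨max N ⌈(N + 1) * f N⌉₊, fun k hk => ?_⟩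
    refine Nat.le_findGreatest (le_of_max_le_left hk) ?_
    exact (Nat.le_ceil _).trans (by exact_mod_cast le_of_max_le_right hk)
  · filter_upwards [eventually_ge_atTop ⌈f 0⌉₊] with k hk
    refine Nat.findGreatest_spec (P := P k) (Nat.zero_le k) ?_
    simpa [P] using (Nat.le_ceil _).trans (by exact_mod_cast hk : (⌈f 0⌉₊ : ℝ) ≤ k)

section Cesaro

variable {E : Type*} [SeminormedAddCommGroup E]

theorem exists_strictMono_norm_sum_le {z : ℕ → E} {R ε : ℕ → ℝ} (hR : Monotone R)
    (hR0 : 0 ≤ R 0) (hε : ∀ k, 0 ≤ ε k)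
    (hstep : ∀ k (S : E) i, ∃ j > i, ‖S + z j‖ ≤ max (R k) (‖S‖ + ε k)) :
    ∃ ψ : ℕ → ℕ, StrictMono ψ ∧
      ∀ k, ‖∑ j ∈ Finset.range k, z (ψ j)‖ ≤ R k + ∑ j ∈ Finset.range k, ε j := by
  choose next hnext_gt hnext using hstep
  let state : ℕ → ℕ × E := fun k => Nat.rec (0, 0)
    (fun k p => (next k p.2 p.1, p.2 + z (next k p.2 p.1))) k
  let ψ k := (state (k + 1)).1
  have hsum : ∀ k, (state k).2 = ∑ j ∈ Finset.range k, z (ψ j) := by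
    intro k
    induction k with
    | zero => rfl
    | succ k ih => rw [Finset.sum_range_succ, ← ih]
  refine ⟨ψ, strictMono_nat_of_lt_succ fun k => hnext_gt _ _ _, fun k => ?_⟩
  rw [← hsum]
  induction k with
  | zero => simpa [state] using hR0
  | succ k ih =>
    refine (hnext k (state k).2 (state k).1).trans (max_le ?_ ?_)
    · have := Finset.sum_nonneg fun j (_ : j ∈ Finset.range (k + 1)) => hε j
      linarith [hR k.le_succ]
    · rw [Finset.sum_range_succ]
      linarith [hR k.le_succ]

theorem exists_strictMono_tendsto_cesaro_zero [NormedSpace ℝ E] {z : ℕ → E}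
    (hz : ∀ ε > 0, ∃ R, ∀ (S : E) (i : ℕ), ∃ j > i, ‖S + z j‖ ≤ max R (‖S‖ + ε)) :
    ∃ ψ : ℕ → ℕ, StrictMono ψ ∧
      Tendsto (fun k : ℕ => (k : ℝ)⁻¹ • ∑ j ∈ Finset.range k, z (ψ j)) atTop (𝓝 0) := by
  choose R hR using fun m : ℕ => hz (1 / (m + 1)) (by positivity)
  let R' := partialSups fun m => max (R m) 0
  have hR' : ∀ m, max (R m) 0 ≤ R' m := le_partialSups _
  obtain ⟨m, hm_mono, hm_top, hm_le⟩ := exists_monotone_tendsto_atTop_eventually_mul_le R'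
  obtain ⟨ψ, hψ, hbound⟩ := exists_strictMono_norm_sum_le (z := z)
    (R := fun k => R' (m k)) (ε := fun k => 1 / ((m k : ℝ) + 1)) (R'.monotone.comp hm_mono)
    ((le_max_right _ _).trans (hR' _)) (fun k => by positivity) fun k S i => by
      obtain ⟨j, hji, hj⟩ := hR (m k) S i
      exact ⟨j, hji, hj.trans (max_le_max_right _ ((le_max_left _ _).trans (hR' _)))⟩
  refine ⟨ψ, hψ, ?_⟩
  have hinv : Tendsto (fun k => 1 / ((m k : ℝ) + 1)) atTop (𝓝 0) :=
    tendsto_one_div_add_atTop_nhds_zero_nat.comp hm_top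
  rw [tendsto_zero_iff_norm_tendsto_zero]
  refine squeeze_zero' (Eventually.of_forall fun k => norm_nonneg _) ?_ (by
    simpa only [add_zero] using hinv.add hinv.cesaro)
  filter_upwards [hm_le, eventually_gt_atTop 0] with k hk hk_pos
  have hk0 : (0 : ℝ) < k := by exact_mod_cast hk_pos
  have hRk : R' (m k) / k ≤ 1 / ((m k : ℝ) + 1) := by
    rw [div_le_div_iff₀ hk0 (by positivity)]
    linarith
  calc ‖(k : ℝ)⁻¹ • ∑ j ∈ Finset.range k, z (ψ j)‖
      ≤ (k : ℝ)⁻¹ * (R' (m k) + ∑ j ∈ Finset.range k, 1 / ((m j : ℝ) + 1)) := by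
        rw [norm_smul, norm_inv, Real.norm_natCast]
        gcongr
        exact hbound k
    _ = R' (m k) / k + (k : ℝ)⁻¹ * ∑ j ∈ Finset.range k, 1 / ((m j : ℝ) + 1) := by ring
    _ ≤ 1 / ((m k : ℝ) + 1) + (k : ℝ)⁻¹ * ∑ j ∈ Finset.range k, 1 / ((m j : ℝ) + 1) := by
        gcongr

end Cesaro

variable {E : Type*} [NormedAddCommGroup E] [NormedSpace ℝ E]

theorem _root_.Submodule.exists_dual_vanishing_ne_zero_of_notMem {W : Submodule ℝ E}
    (hW : IsClosed (W : Set E)) {v : E} (hv : v ∉ W) :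
    ∃ g : StrongDual ℝ E, (∀ w ∈ W, g w = 0) ∧ g v ≠ 0 := by
  have hnorm : ‖(Submodule.Quotient.mk v : E ⧸ W)‖ ≠ 0 := by
    rw [show ‖(Submodule.Quotient.mk v : E ⧸ W)‖ = infDist v W from QuotientAddGroup.norm_mk v]
    exact ((hW.notMem_iff_infDist_pos ⟨0, W.zero_mem⟩).1 hv).ne'
  obtain ⟨g, -, hgv⟩ := exists_dual_vector ℝ _ hnorm
  refine ⟨g.comp W.mkQL, fun w hw => ?_, ?_⟩
  · simp [(Submodule.Quotient.mk_eq_zero W).2 hw]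
  · simpa [hgv] using hnorm

theorem BanachReflexive.submodule_of_isClosed (hE : BanachReflexive E) {Y : Submodule ℝ E}
    (hY : IsClosed (Y : Set E)) : BanachReflexive Y := by
  intro Λ
  let restrict : StrongDual ℝ E →L[ℝ] StrongDual ℝ Y :=
    (ContinuousLinearMap.compL ℝ Y E ℝ).flip Y.subtypeL
  obtain ⟨x, hx⟩ := hE (Λ.comp restrict)
  have hΛ : ∀ g : StrongDual ℝ E, g x = Λ (g.comp Y.subtypeL) := fun g =>
    congrArg (fun T => T g) hx
  have hxY : x ∈ Y := by
    by_contra hxY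
    obtain ⟨g, hgY, hgx⟩ := Submodule.exists_dual_vanishing_ne_zero_of_notMem hY hxY
    have hg0 : g.comp Y.subtypeL = 0 := by ext y; exact hgY y y.2
    exact hgx (by rw [hΛ, hg0, map_zero])
  refine ⟨⟨x, hxY⟩, ContinuousLinearMap.ext fun f => ?_⟩
  obtain ⟨g, hg, -⟩ := exists_extension_norm_eq Y f
  have hgf : g.comp Y.subtypeL = f := ContinuousLinearMap.ext hg
  calc f ⟨x, hxY⟩ = g x := (hg _).symm
    _ = Λ f := by rw [hΛ, hgf]

theorem separableSpace_of_separableSpace_strongDual [SeparableSpace (StrongDual ℝ E)] :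
    SeparableSpace E := by
  obtain ⟨D, hDcount, hDdense⟩ := exists_countable_dense (StrongDual ℝ E)
  have hnorming : ∀ f : StrongDual ℝ E, ∃ z : E, ‖z‖ ≤ 1 ∧ ‖f‖ / 2 ≤ ‖f z‖ := by
    intro f
    rcases (norm_nonneg f).eq_or_lt with hf | hf
    · exact ⟨0, by simp, by simp [← hf]⟩
    · obtain ⟨z, hz, hfz⟩ := f.exists_lt_apply_of_lt_opNorm (half_lt_self hf)
      exact ⟨z, hz.le, hfz.le⟩
  choose z hz1 hz using hnorming
  set W := (Submodule.span ℝ (z '' D)).topologicalClosure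
  -- a functional vanishing on `W` is close to some `f ∈ D`, which is large at `z f ∈ W`
  have hW : W = ⊤ := by
    refine Submodule.eq_top_iff'.2 fun v => by_contra fun hv => ?_
    obtain ⟨g, hgW, hgv⟩ :=
      Submodule.exists_dual_vanishing_ne_zero_of_notMem (Submodule.isClosed_topologicalClosure _) hv
    have hg : 0 < ‖g‖ := norm_pos_iff.2 fun h => hgv (by simp [h])
    obtain ⟨f, hfD, hfg⟩ := hDdense.exists_dist_lt g (by positivity : 0 < ‖g‖ / 4)
    rw [dist_eq_norm'] at hfg
    have hzW : z f ∈ W :=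
      Submodule.le_topologicalClosure _ (Submodule.subset_span ⟨f, hfD, rfl⟩)
    have hsmall : ‖f (z f)‖ ≤ ‖g - f‖ := by
      calc ‖f (z f)‖ = ‖(g - f) (z f)‖ := by simp [hgW _ hzW]
        _ ≤ ‖g - f‖ * ‖z f‖ := (g - f).le_opNorm _
        _ ≤ ‖g - f‖ := mul_le_of_le_one_right (norm_nonneg _) (hz1 f)
    have := norm_sub_norm_le g f
    linarith [hz f, norm_sub_rev f g]
  have hsep : IsSeparable (W : Set E) := by
    rw [Submodule.topologicalClosure_coe]
    exact ((hDcount.image z).isSeparable.span).closure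
  rw [hW, Submodule.top_coe] at hsep
  exact isSeparable_univ_iff.1 hsep

theorem BanachReflexive.exists_subseq_weakly_tendsto_of_separableSpace [SeparableSpace E]
    (hE : BanachReflexive E) {x : ℕ → E} {b : ℝ} (hb : ∀ n, ‖x n‖ ≤ b) :
    ∃ φ : ℕ → ℕ, StrictMono φ ∧ ∃ L : E,
      ∀ f : StrongDual ℝ E, Tendsto (fun n => f (x (φ n))) atTop (𝓝 (f L)) := by
  have : SeparableSpace (StrongDual ℝ (StrongDual ℝ E)) :=
    hE.denseRange.separableSpace (inclusionInDoubleDual ℝ E).continuous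
  have : SeparableSpace (StrongDual ℝ E) :=
    separableSpace_of_separableSpace_strongDual (E := StrongDual ℝ E)
  let u : ℕ → WeakDual ℝ (StrongDual ℝ E) :=
    fun n => StrongDual.toWeakDual (inclusionInDoubleDual ℝ E (x n))
  have hu : ∀ n, u n ∈ WeakDual.toStrongDual ⁻¹' closedBall 0 b := fun n =>
    (dist_zero_right (inclusionInDoubleDual ℝ E (x n))).trans_le
      ((double_dual_bound ℝ E (x n)).trans (hb n))
  obtain ⟨a, -, φ, hφ, hua⟩ := WeakDual.isSeqCompact_closedBall ℝ _ 0 b hu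
  obtain ⟨L, hL⟩ := hE (WeakDual.toStrongDual a)
  refine ⟨φ, hφ, L, fun f => ?_⟩
  have haf : a f = f L := (congrArg (fun T => T f) hL).symm
  have := ((WeakDual.eval_continuous f).tendsto a).comp hua
  rwa [haf] at this

theorem BanachReflexive.exists_subseq_weakly_tendsto (hE : BanachReflexive E) {x : ℕ → E}
    {b : ℝ} (hb : ∀ n, ‖x n‖ ≤ b) :
    ∃ φ : ℕ → ℕ, StrictMono φ ∧ ∃ L : E,
      ∀ f : StrongDual ℝ E, Tendsto (fun n => f (x (φ n))) atTop (𝓝 (f L)) := by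
  set Y := (Submodule.span ℝ (range x)).topologicalClosure
  have hxY : ∀ n, x n ∈ Y :=
    fun n => Submodule.le_topologicalClosure _ (Submodule.subset_span (mem_range_self n))
  have : SeparableSpace Y := by
    refine IsSeparable.separableSpace ?_
    rw [Submodule.topologicalClosure_coe]
    exact ((countable_range x).isSeparable.span).closure
  have hYrefl : BanachReflexive Y :=
    hE.submodule_of_isClosed (Submodule.isClosed_topologicalClosure _)
  obtain ⟨φ, hφ, L, hL⟩ := hYrefl.exists_subseq_weakly_tendsto_of_separableSpace
    (x := fun n => ⟨x n, hxY n⟩) (b := b) (by simpa using hb)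
  exact ⟨φ, hφ, L, fun f => hL (f.comp Y.subtypeL)⟩

theorem WeaklyNull.tendsto_of_finiteDimensional [FiniteDimensional ℝ E] {z : ℕ → E}
    (hz : WeaklyNull z) : Tendsto z atTop (𝓝 0) := by
  let e := (Module.finBasis ℝ E).equivFun.toContinuousLinearEquiv
  have he : Tendsto (fun n => e (z n)) atTop (𝓝 0) :=
    tendsto_pi_nhds.2 fun i => by
      simpa [e] using hz (LinearMap.toContinuousLinearMap ((Module.finBasis ℝ E).coord i))
  simpa [Function.comp_def] using (e.symm.continuous.tendsto 0).comp he

theorem WeaklyNull.tendsto_infDist {z : ℕ → E} (hz : WeaklyNull z) (F : Submodule ℝ E)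
    [FiniteDimensional ℝ (E ⧸ F)] : Tendsto (fun n => infDist (z n) F) atTop (𝓝 0) := by
  set C := F.topologicalClosure
  have : IsClosed (C : Set E) := F.isClosed_topologicalClosure
  have : FiniteDimensional ℝ (E ⧸ C) :=
    Module.Finite.of_surjective _ (Submodule.factor_surjective F.le_topologicalClosure)
  have hq : WeaklyNull fun n => C.mkQL (z n) := fun f => hz (f.comp C.mkQL)
  refine (tendsto_zero_iff_norm_tendsto_zero.1 hq.tendsto_of_finiteDimensional).congr fun n => ?_
  rw [show ‖C.mkQL (z n)‖ = infDist (z n) C from QuotientAddGroup.norm_mk (z n),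
    Submodule.topologicalClosure_coe, infDist_closure]

theorem norm_add_smul_le_of_norm_add_smul_le {x h : E} {ε t s : ℝ}
    (hxt : ‖x + t • h‖ ≤ ‖x‖ + ε * t) (hs : 0 ≤ s) (hst : s ≤ t) :
    ‖x + s • h‖ ≤ ‖x‖ + ε * s := by
  rcases hs.eq_or_lt with rfl | hs
  · simp
  have ht : 0 < t := hs.trans_le hst
  set a := s / t
  have ha : 0 ≤ a := by positivity
  have ha1 : a ≤ 1 := div_le_one_of_le₀ hst ht.le
  have hconv : x + s • h = (1 - a) • x + a • (x + t • h) := by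
    rw [smul_add, smul_smul, div_mul_cancel₀ s ht.ne', sub_smul, one_smul]
    abel
  calc ‖x + s • h‖ ≤ (1 - a) * ‖x‖ + a * ‖x + t • h‖ := by
        rw [hconv]
        refine (norm_add_le _ _).trans_eq ?_
        rw [norm_smul, norm_smul, Real.norm_of_nonneg (sub_nonneg.2 ha1), Real.norm_of_nonneg ha]
    _ ≤ (1 - a) * ‖x‖ + a * (‖x‖ + ε * t) := by gcongr
    _ = ‖x‖ + ε * (a * t) := by ring
    _ = ‖x‖ + ε * s := by rw [div_mul_cancel₀ s ht.ne']

theorem exists_norm_add_smul_le_of_ausModulus_lt {t c : ℝ} (ht : 0 ≤ t)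
    (hc : ausModulus E t < c) {x : E} (hx : ‖x‖ = 1) :
    ∃ F : Submodule ℝ E, FiniteDimensional ℝ (E ⧸ F) ∧
      ∀ h ∈ F, ‖h‖ = 1 → ‖x + t • h‖ ≤ 1 + c := by
  have hterm : ∀ y h : E, ‖y‖ = 1 → ‖h‖ = 1 → |‖y + t • h‖ - 1| ≤ t := fun y h hy hh => by
    simpa [hy, hh, norm_smul, abs_of_nonneg ht] using abs_norm_sub_norm_le (y + t • h) y
  let UnitVec := {y : E // ‖y‖ = 1}
  let FinCodim := {F : Submodule ℝ E // FiniteDimensional ℝ (E ⧸ F)}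
  let σ (y : UnitVec) (F : FinCodim) : ℝ :=
    ⨆ h : {h : E // h ∈ F.1 ∧ ‖h‖ = 1}, (‖y.1 + t • h.1‖ - 1)
  have hσ_bdd : ∀ (y : UnitVec) (F : FinCodim), BddAbove
      (range fun h : {h : E // h ∈ F.1 ∧ ‖h‖ = 1} => ‖y.1 + t • h.1‖ - 1) := fun y F =>
    ⟨t, by rintro _ ⟨h, rfl⟩; exact (le_abs_self _).trans (hterm _ _ y.2 h.2.2)⟩
  have hσ_le : ∀ (y : UnitVec) (F : FinCodim), σ y F ≤ t := fun y F =>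
    Real.iSup_le (fun h => (le_abs_self _).trans (hterm _ _ y.2 h.2.2)) ht
  have hσ_ge : ∀ (y : UnitVec) (F : FinCodim), -t ≤ σ y F := by
    intro y F
    rcases isEmpty_or_nonempty {h : E // h ∈ F.1 ∧ ‖h‖ = 1} with hF | ⟨⟨h⟩⟩
    · simp [σ, Real.iSup_of_isEmpty, ht]
    · exact (neg_le_of_abs_le (hterm _ _ y.2 h.2.2)).trans (le_ciSup (hσ_bdd y F) h)
  have : Nonempty FinCodim := ⟨⟨⊤, inferInstance⟩⟩
  have hinf_le : ⨅ F, σ ⟨x, hx⟩ F ≤ ausModulus E t :=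
    le_ciSup (f := fun y => ⨅ F, σ y F) ⟨t, by
      rintro _ ⟨y, rfl⟩
      exact (ciInf_le ⟨-t, by rintro _ ⟨F, rfl⟩; exact hσ_ge y F⟩ ⟨⊤, inferInstance⟩).trans
        (hσ_le _ _)⟩ ⟨x, hx⟩
  obtain ⟨F, hF⟩ := exists_lt_of_ciInf_lt (hinf_le.trans_lt hc)
  refine ⟨F.1, F.2, fun h hhF hh => ?_⟩
  have := le_ciSup (hσ_bdd ⟨x, hx⟩ F) ⟨h, hhF, hh⟩
  linarith

theorem AsympUniformlySmooth.exists_norm_add_le (hE : AsympUniformlySmooth E) {ε : ℝ}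
    (hε : 0 < ε) : ∃ t > 0, ∀ x : E, ∃ F : Submodule ℝ E, FiniteDimensional ℝ (E ⧸ F) ∧
      ∀ v ∈ F, ‖v‖ ≤ t * ‖x‖ → ‖x + v‖ ≤ ‖x‖ + ε * ‖v‖ := by
  obtain ⟨t, hρ, ht : 0 < t⟩ :=
    ((hE.eventually (gt_mem_nhds hε)).and self_mem_nhdsWithin).exists
  refine ⟨t, ht, fun x => ?_⟩
  rcases eq_or_ne x 0 with rfl | hx
  · exact ⟨⊤, inferInstance, fun v _ hv => by simp_all⟩
  have hx' : 0 < ‖x‖ := norm_pos_iff.2 hx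
  have hunit : ∀ {y : E}, y ≠ 0 → ‖‖y‖⁻¹ • y‖ = 1 := fun hy => by
    rw [norm_smul, norm_inv, norm_norm, inv_mul_cancel₀ (norm_ne_zero_iff.2 hy)]
  obtain ⟨F, hF, hFx⟩ := exists_norm_add_smul_le_of_ausModulus_lt ht.le
    ((div_lt_iff₀ ht).1 hρ) (hunit hx)
  refine ⟨F, hF, fun v hvF hv => ?_⟩
  rcases eq_or_ne v 0 with rfl | hv0
  · simp
  have hv' : 0 < ‖v‖ := norm_pos_iff.2 hv0
  -- rescale to the unit vector `‖x‖⁻¹ • x` and the unit direction `h`, at distance `s ≤ t`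
  set h := ‖v‖⁻¹ • v
  set s := ‖v‖ / ‖x‖
  have hs : s ≤ t := (div_le_iff₀ hx').2 hv
  have hscale : x + v = ‖x‖ • (‖x‖⁻¹ • x + s • h) := by
    simp only [h, s, smul_add, smul_smul]
    field_simp
    simp
  have key := norm_add_smul_le_of_norm_add_smul_le (x := ‖x‖⁻¹ • x) (h := h)
    (by rw [hunit hx]; exact hFx h (F.smul_mem _ hvF) (hunit hv0)) (by positivity) hs
  rw [hunit hx] at key
  calc ‖x + v‖ = ‖x‖ * ‖‖x‖⁻¹ • x + s • h‖ := by rw [hscale, norm_smul, norm_norm]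
    _ ≤ ‖x‖ * (1 + ε * s) := by gcongr
    _ = ‖x‖ + ε * ‖v‖ := by simp only [s]; field_simp

theorem AsympUniformlySmooth.exists_norm_add_le_max (hE : AsympUniformlySmooth E)
    {z : ℕ → E} (hz : WeaklyNull z) {b : ℝ} (hb : ∀ n, ‖z n‖ ≤ b) {ε : ℝ} (hε : 0 < ε) :
    ∃ R, ∀ (S : E) (i : ℕ), ∃ j > i, ‖S + z j‖ ≤ max R (‖S‖ + ε) := by
  have hb1 : 0 < b + 1 := by linarith [(norm_nonneg _).trans (hb 0)]
  obtain ⟨t, ht, hsmooth⟩ := hE.exists_norm_add_le (ε := ε / (2 * (b + 1))) (by positivity)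
  refine ⟨(b + 1) / t + b, fun S i => ?_⟩
  obtain ⟨F, hF, hFS⟩ := hsmooth S
  set δ := min 1 (ε / 2)
  have hδ : 0 < δ := lt_min one_pos (half_pos hε)
  obtain ⟨j, hjF, hji⟩ :=
    (((hz.tendsto_infDist F).eventually (gt_mem_nhds hδ)).and (eventually_gt_atTop i)).exists
  obtain ⟨h, hhF, hzh⟩ := (infDist_lt_iff ⟨0, F.zero_mem⟩).1 hjF
  rw [dist_eq_norm] at hzh
  have hh : ‖h‖ ≤ b + 1 := by
    have := norm_le_norm_add_norm_sub' h (z j)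
    linarith [hb j, norm_sub_rev (z j) h, min_le_left 1 (ε / 2)]
  refine ⟨j, hji, ?_⟩
  by_cases hS : b + 1 ≤ t * ‖S‖
  · refine le_max_of_le_right ?_
    have hSh := hFS h hhF (hh.trans hS)
    have : ε / (2 * (b + 1)) * ‖h‖ ≤ ε / 2 := by
      rw [div_mul_eq_mul_div, div_le_div_iff₀ (by positivity) two_pos]
      nlinarith
    calc ‖S + z j‖ ≤ ‖S + h‖ + ‖z j - h‖ := by
          simpa [add_add_sub_cancel] using norm_add_le (S + h) (z j - h)
      _ ≤ ‖S‖ + ε := by linarith [min_le_right 1 (ε / 2)]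
  · refine le_max_of_le_left ?_
    have : ‖S‖ ≤ (b + 1) / t := by
      rw [le_div_iff₀ ht]
      linarith
    linarith [norm_add_le S (z j), hb j]

end CLG

theorem banachSaks_of_reflexive_aus_general
    {X : Type*} [NormedAddCommGroup X] [NormedSpace ℝ X]
    (hrefl : CLG.BanachReflexive X) (haus : CLG.AsympUniformlySmooth X) :
    CLG.BanachSaksProp X := by
  rintro x ⟨b, hb⟩
  obtain ⟨φ, hφ, L, hL⟩ := hrefl.exists_subseq_weakly_tendsto hb
  set z := fun n => x (φ n) - L
  have hz : WeaklyNull z := fun f => by simpa [z] using (hL f).sub_const (f L)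
  have hzb : ∀ n, ‖z n‖ ≤ b + ‖L‖ := fun n => (norm_sub_le _ _).trans (by gcongr; exact hb _)
  obtain ⟨ψ, hψ, hces⟩ :=
    exists_strictMono_tendsto_cesaro_zero fun ε hε => haus.exists_norm_add_le_max hz hzb hε
  refine ⟨φ ∘ ψ, hφ.comp hψ, L, ?_⟩
  have hconst := (tendsto_const_nhds (x := L)).cesaro_smul
  rw [← zero_add L]
  refine (hces.add hconst).congr fun k => ?_
  simp [z, Finset.sum_sub_distrib, ← smul_add]

/-- Every reflexive asymptotically uniformly smooth Banach space has the Banach-Saks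
property. -/
theorem banachSaks_of_reflexive_aus
    {X : Type*} [NormedAddCommGroup X] [NormedSpace ℝ X] [CompleteSpace X]
    (hrefl : CLG.BanachReflexive X) (haus : CLG.AsympUniformlySmooth X) :
    CLG.BanachSaksProp X :=
  banachSaks_of_reflexive_aus_general hrefl haus
end
end

section
/- Let X be a Banach space, M a metric space, and f : X → M a coarse map with Lip_∞(f) > 0. Then for every ε, t > 0 and δ ∈ (0,1) there exist x, y ∈ X with ‖x−y‖ > t and f(Mid(x,y,δ)) ⊆ Mid(f(x), f(y), (1+ε)δ). -/
open Filter Topology Metric Set Pointwise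

noncomputable section

open CLG

/-!
Write `ν = Lip_∞(f)` and fix a small `η > 0`. Pick a scale `s` with `ω_f(u) ≤ (ν + η) u` for all
`u ≥ s`, then a large `τ` and a pair `x, y` with `d(x, y) ≤ τ` and `d(f x, f y) > (ν - η) τ`.
Every `z ∈ Mid(x, y, δ)` lies within `u = (1 + δ) τ / 2 ≥ s` of `x` and of `y`, so `f z` lies
within `(ν + η) u` of `f x` and of `f y`, and for small `η` this is at most
`(1 + (1 + ε) δ) / 2 · d(f x, f y)`. Since `f` moves pairs at distance `≤ t` by at most `ω_f(t)`,
taking `(ν - η) τ > ω_f(t)` forces `d(x, y) > t`.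

The suprema `Lip_s(f)` are finite because on a normed space chaining along a segment gives
`ω_f(t) ≤ (t / s + 1) ω_f(s)`.
-/

namespace CLG

section PseudoMetric

variable {X Y : Type*} [PseudoMetricSpace X] [PseudoMetricSpace Y] {f : X → Y}

theorem IsCoarseMap.bddAbove_expansionMod_set (hf : IsCoarseMap f) (t : ℝ) :
    BddAbove {r : ℝ | ∃ x y : X, dist x y ≤ t ∧ r = dist (f x) (f y)} := by
  obtain ⟨C, hC⟩ := hf t
  exact ⟨C, fun r ⟨x, y, hxy, hr⟩ => hr ▸ hC x y hxy⟩

theorem IsCoarseMap.dist_le_expansionMod (hf : IsCoarseMap f) {x y : X} {t : ℝ}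
    (h : dist x y ≤ t) : dist (f x) (f y) ≤ expansionMod f t :=
  le_csSup (hf.bddAbove_expansionMod_set t) ⟨x, y, h, rfl⟩

theorem IsCoarseMap.image_mid_subset_mid (hf : IsCoarseMap f) {x y : X} {δ δ' a b τ : ℝ}
    (hδ : 0 ≤ 1 + δ) (hδ' : 0 ≤ 1 + δ') (hxy : dist x y ≤ τ)
    (hfxy : a * τ ≤ dist (f x) (f y))
    (hω : expansionMod f ((1 + δ) / 2 * τ) ≤ b * ((1 + δ) / 2 * τ))
    (hab : b * (1 + δ) ≤ a * (1 + δ')) :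
    f '' Mid x y δ ⊆ Mid (f x) (f y) δ' := by
  rintro _ ⟨z, hz, rfl⟩
  have hτ : 0 ≤ τ := dist_nonneg.trans hxy
  have hnear (w : X) (hw : dist w z ≤ (1 + δ) / 2 * dist x y) :
      dist (f w) (f z) ≤ (1 + δ') / 2 * dist (f x) (f y) :=
    calc dist (f w) (f z) ≤ expansionMod f ((1 + δ) / 2 * τ) :=
          hf.dist_le_expansionMod (hw.trans (by gcongr))
      _ ≤ b * (1 + δ) / 2 * τ := by linarith
      _ ≤ a * (1 + δ') / 2 * τ := by gcongr
      _ = (1 + δ') / 2 * (a * τ) := by ring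
      _ ≤ (1 + δ') / 2 * dist (f x) (f y) := by gcongr
  exact max_le (hnear x ((le_max_left _ _).trans hz)) (hnear y ((le_max_right _ _).trans hz))

variable [Nonempty X]

theorem expansionMod_set_nonempty (f : X → Y) {t : ℝ} (ht : 0 ≤ t) :
    {r : ℝ | ∃ x y : X, dist x y ≤ t ∧ r = dist (f x) (f y)}.Nonempty :=
  let x := Classical.arbitrary X
  ⟨_, x, x, by rwa [dist_self], rfl⟩

theorem expansionMod_le {t B : ℝ} (ht : 0 ≤ t)
    (h : ∀ x y : X, dist x y ≤ t → dist (f x) (f y) ≤ B) : expansionMod f t ≤ B :=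
  csSup_le (expansionMod_set_nonempty f ht) fun _ ⟨x, y, hxy, hr⟩ => hr ▸ h x y hxy

theorem exists_lt_dist_of_lt_expansionMod {t r : ℝ} (ht : 0 ≤ t) (h : r < expansionMod f t) :
    ∃ x y : X, dist x y ≤ t ∧ r < dist (f x) (f y) := by
  obtain ⟨_, ⟨x, y, hxy, rfl⟩, hr⟩ := exists_lt_of_lt_csSup (expansionMod_set_nonempty f ht) h
  exact ⟨x, y, hxy, hr⟩

theorem IsCoarseMap.expansionMod_nonneg (hf : IsCoarseMap f) {t : ℝ} (ht : 0 ≤ t) :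
    0 ≤ expansionMod f t := by
  let x := Classical.arbitrary X
  simpa using hf.dist_le_expansionMod (x := x) (y := x) (by rwa [dist_self])

end PseudoMetric

section Normed

variable {X Y : Type*} [SeminormedAddCommGroup X] [NormedSpace ℝ X] [PseudoMetricSpace Y]
  {f : X → Y}

theorem dist_le_nat_mul_of_forall_dist_le {s C : ℝ}
    (hC : ∀ x y : X, dist x y ≤ s → dist (f x) (f y) ≤ C) {n : ℕ} (hn : n ≠ 0) {x y : X}
    (hxy : dist x y ≤ n * s) : dist (f x) (f y) ≤ n * C := by
  let p : ℕ → X := fun i => AffineMap.lineMap x y ((i : ℝ) / n)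
  have hstep (i : ℕ) : dist (p i) (p (i + 1)) ≤ s := by
    have hn' : (0 : ℝ) < n := by positivity
    rw [dist_lineMap_lineMap, dist_comm, Real.dist_eq, ← sub_div, Nat.cast_succ,
      add_sub_cancel_left, abs_of_pos (by positivity), one_div_mul_eq_div, div_le_iff₀' hn']
    exact hxy
  calc dist (f x) (f y) = dist (f (p 0)) (f (p n)) := by simp [p, hn]
    _ ≤ ∑ i ∈ Finset.range n, dist (f (p i)) (f (p (i + 1))) :=
      dist_le_range_sum_dist (fun i => f (p i)) n
    _ ≤ ∑ _i ∈ Finset.range n, C := Finset.sum_le_sum fun i _ => hC _ _ (hstep i)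
    _ = n * C := by simp

theorem IsCoarseMap.expansionMod_le_mul (hf : IsCoarseMap f) {s t : ℝ} (hs : 0 < s)
    (ht : 0 ≤ t) : expansionMod f t ≤ (t / s + 1) * expansionMod f s := by
  have hfloor := Nat.lt_floor_add_one (t / s)
  refine expansionMod_le ht fun x y hxy => ?_
  calc dist (f x) (f y) ≤ ((⌊t / s⌋₊ + 1 : ℕ) : ℝ) * expansionMod f s := by
        refine dist_le_nat_mul_of_forall_dist_le (fun _ _ => hf.dist_le_expansionMod)
          (Nat.succ_ne_zero _) (hxy.trans ?_)
        rw [div_lt_iff₀ hs] at hfloor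
        exact_mod_cast hfloor.le
    _ ≤ (t / s + 1) * expansionMod f s := by
        gcongr
        · exact hf.expansionMod_nonneg hs.le
        · push_cast
          linarith [Nat.floor_le (div_nonneg ht hs.le)]

theorem IsCoarseMap.bddAbove_range_lipAt (hf : IsCoarseMap f) {s : ℝ} (hs : 0 < s) :
    BddAbove (range fun t : {t : ℝ // s ≤ t} => expansionMod f t.1 / t.1) := by
  refine ⟨2 * expansionMod f s / s, ?_⟩
  rintro _ ⟨⟨t, hst⟩, rfl⟩
  have ht : 0 < t := hs.trans_le hst
  have hωs := hf.expansionMod_nonneg hs.le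
  rw [div_le_div_iff₀ ht hs]
  calc expansionMod f t * s ≤ (t / s + 1) * expansionMod f s * s := by
        gcongr
        exact hf.expansionMod_le_mul hs ht.le
    _ = (t + s) * expansionMod f s := by field_simp
    _ ≤ 2 * expansionMod f s * t := by nlinarith

theorem IsCoarseMap.expansionMod_div_le_lipAt (hf : IsCoarseMap f) {s t : ℝ} (hs : 0 < s)
    (hst : s ≤ t) : expansionMod f t / t ≤ lipAt f s :=
  le_ciSup (hf.bddAbove_range_lipAt hs) ⟨t, hst⟩

theorem IsCoarseMap.lipInfty_le_lipAt (hf : IsCoarseMap f) {s : ℝ} (hs : 0 < s) :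
    lipInfty f ≤ lipAt f s := by
  refine ciInf_le ⟨0, ?_⟩ (⟨s, hs⟩ : {s : ℝ // 0 < s})
  rintro _ ⟨⟨u, hu⟩, rfl⟩
  exact (div_nonneg (hf.expansionMod_nonneg hu.le) hu.le).trans
    (hf.expansionMod_div_le_lipAt hu le_rfl)

theorem IsCoarseMap.exists_lt_mul_expansionMod (hf : IsCoarseMap f) {T c : ℝ} (hT : 0 < T)
    (hc : c < lipInfty f) : ∃ τ, T ≤ τ ∧ c * τ < expansionMod f τ := by
  obtain ⟨⟨τ, hTτ⟩, hτ⟩ := exists_lt_of_lt_ciSup (hc.trans_le (hf.lipInfty_le_lipAt hT))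
  exact ⟨τ, hTτ, (lt_div_iff₀ (hT.trans_le hTτ)).1 hτ⟩

end Normed

theorem exists_pos_lt_add_mul_le_sub_mul {ν ε δ : ℝ} (hν : 0 < ν) (hε : 0 < ε) (hδ : 0 < δ) :
    ∃ η, 0 < η ∧ η < ν ∧ (ν + η) * (1 + δ) ≤ (ν - η) * (1 + (1 + ε) * δ) := by
  have hD : 0 < 2 + 2 * δ + ε * δ := by positivity
  -- the largest admissible `η`: it makes the last inequality an equality
  refine ⟨ν * ε * δ / (2 + 2 * δ + ε * δ), by positivity, ?_, le_of_eq ?_⟩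
  · rw [div_lt_iff₀ hD]
    nlinarith [mul_pos hν hδ]
  · field_simp
    ring

end CLG

theorem mid_image_subset_mid_of_coarse_general
    {X M : Type*} [NormedAddCommGroup X] [NormedSpace ℝ X]
    [MetricSpace M] (f : X → M) (hf : CLG.IsCoarseMap f) (hl : 0 < CLG.lipInfty f) :
    ∀ ε > (0:ℝ), ∀ t > (0:ℝ), ∀ δ ∈ Set.Ioo (0:ℝ) 1,
      ∃ x y : X, t < dist x y ∧
        f '' CLG.Mid x y δ ⊆ CLG.Mid (f x) (f y) ((1 + ε) * δ) := by
  rintro ε hε t - δ ⟨hδ, -⟩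
  obtain ⟨η, hη, hην, hmargin⟩ := exists_pos_lt_add_mul_le_sub_mul hl hε hδ
  obtain ⟨⟨s, hs⟩, hsη⟩ := exists_lt_of_ciInf_lt (lt_add_of_pos_right (lipInfty f) hη)
  have hνη : 0 < lipInfty f - η := sub_pos.2 hην
  obtain ⟨τ, hTτ, hτ⟩ := hf.exists_lt_mul_expansionMod
    (T := max (2 * s) (expansionMod f t / (lipInfty f - η) + 1))
    (lt_max_of_lt_left (by positivity)) (sub_lt_self _ hη)
  have hτ0 : 0 < τ := (lt_max_of_lt_left (by positivity)).trans_le hTτ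
  obtain ⟨x, y, hxy, hfxy⟩ := exists_lt_dist_of_lt_expansionMod hτ0.le hτ
  refine ⟨x, y, ?_, hf.image_mid_subset_mid (by linarith) (by positivity) hxy hfxy.le ?_ hmargin⟩
  · have hωt : expansionMod f t < (lipInfty f - η) * τ := by
      rw [← div_lt_iff₀' hνη]
      linarith [le_max_right (2 * s) (expansionMod f t / (lipInfty f - η) + 1)]
    exact lt_of_not_ge fun h => (hωt.trans (hfxy.trans_le (hf.dist_le_expansionMod h))).false
  · have hsu : s ≤ (1 + δ) / 2 * τ := by
      nlinarith [le_max_left (2 * s) (expansionMod f t / (lipInfty f - η) + 1)]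
    rw [← div_le_iff₀ (by positivity)]
    exact (hf.expansionMod_div_le_lipAt hs hsu).trans hsη.le

/-- (Kalton–Randrianarivony) A coarse map `f` with `Lip_∞(f) > 0` maps some approximate
midpoint set of arbitrarily distant points into an approximate midpoint set of the
images, with error inflated by `1 + ε`. -/
theorem mid_image_subset_mid_of_coarse
    {X M : Type*} [NormedAddCommGroup X] [NormedSpace ℝ X] [CompleteSpace X]
    [MetricSpace M] (f : X → M) (hf : CLG.IsCoarseMap f) (hl : 0 < CLG.lipInfty f) :
    ∀ ε > (0:ℝ), ∀ t > (0:ℝ), ∀ δ ∈ Set.Ioo (0:ℝ) 1,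
      ∃ x y : X, t < dist x y ∧
        f '' CLG.Mid x y δ ⊆ CLG.Mid (f x) (f y) ((1 + ε) * δ) :=
  mid_image_subset_mid_of_coarse_general f hf hl
end
end
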